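/- arXiv:2009.06445 — 10 statements merged into one kernel-verified Lean document; each statement's English description precedes it below -/
import Mathlib

section
/- Every closed subset X of [ω]^ω such that any two elements of X have infinite intersection is σ-compact (where elements of [ω]^ω are identified with their increasing enumerations in ω^ω, or with characteristic functions in 2^ω). -/
/-!
Suppose `X` is not σ-compact and call a finite sequence `s` big when `X ∩ [s]` is not σ-compact.
If no big extension of a big `s` had infinitely many big one-step extensions, the big extensions
of `s` would form a finitely branching tree; the points of `X ∩ [s]` all of whose restrictions are
big would then form a compact set, and the remaining points are covered by the countably many
σ-compact sets `X ∩ [t]`, `t` not big, so `X ∩ [s]` would be σ-compact. Hence every big node has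
an extension with infinitely many big successors (Hurewicz). Starting from such a node we grow two
branches alternately, each time passing to a big successor above every value used so far on the
other branch; as the elements of `X` are increasing, all later values of that branch stay above
too. Since `X` is closed, both limits lie in `X`, and their ranges meet only in the common stem.
-/

open Set Filter Topology

lemma isCompact_of_finite_image_eval {ι : Type*} {E : ι → Type*} [∀ i, TopologicalSpace (E i)]
    {K : Set (∀ i, E i)} (hK : IsClosed K) (hfin : ∀ i, (Function.eval i '' K).Finite) :
    IsCompact K :=
  (isCompact_univ_pi fun i => (hfin i).isCompact).of_isClosed_subset hK
    fun y hy _ _ => ⟨y, hy, rfl⟩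

lemma IsSigmaCompact.union {E : Type*} [TopologicalSpace E] {A B : Set E}
    (hA : IsSigmaCompact A) (hB : IsSigmaCompact B) : IsSigmaCompact (A ∪ B) := by
  rw [union_eq_iUnion]
  exact isSigmaCompact_iUnion _ (Bool.forall_bool.2 ⟨hB, hA⟩)

namespace Baire

def cyl (s : List ℕ) : Set (ℕ → ℕ) := {y | ∀ i (h : i < s.length), y i = s[i]}

def res (y : ℕ → ℕ) (n : ℕ) : List ℕ := (List.range n).map y

@[simp] lemma length_res (y : ℕ → ℕ) (n : ℕ) : (res y n).length = n := by simp [res]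

@[simp] lemma getElem_res (y : ℕ → ℕ) {n i : ℕ} (h : i < (res y n).length) :
    (res y n)[i] = y i := by simp [res]

lemma res_succ (y : ℕ → ℕ) (n : ℕ) : res y (n + 1) = res y n ++ [y n] := by
  simp [res, List.range_succ]

lemma res_prefix_res (y : ℕ → ℕ) {m n : ℕ} (h : m ≤ n) : res y m <+: res y n :=
  List.prefix_iff_eq_take.2 <| List.ext_getElem (by simpa using h) fun i _ _ => by simp

lemma mem_cyl_iff {y : ℕ → ℕ} {s : List ℕ} : y ∈ cyl s ↔ res y s.length = s := by
  refine ⟨fun h => List.ext_getElem (by simp) fun i _ hi => by simp [h i hi], fun h i hi => ?_⟩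
  rw [← List.getElem_of_eq h (by simpa), getElem_res]

lemma mem_cyl_res (y : ℕ → ℕ) (n : ℕ) : y ∈ cyl (res y n) := by
  rw [mem_cyl_iff, length_res]

@[simp] lemma cyl_nil : cyl [] = univ := by simp [cyl]

lemma isOpen_setOf_res (P : List ℕ → Prop) (n : ℕ) : IsOpen {y | P (res y n)} := by
  refine isOpen_iff_forall_mem_open.2 fun y hy =>
    ⟨PiNat.cylinder y n, fun z hz => ?_, PiNat.isOpen_cylinder _ y n,
      PiNat.self_mem_cylinder y n⟩
  have : res z n = res y n := List.map_congr_left fun i hi => hz i (List.mem_range.1 hi)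
  rwa [mem_ofPred_eq, this]

lemma isClosed_setOf_res (P : List ℕ → Prop) (n : ℕ) : IsClosed {y | P (res y n)} :=
  isOpen_compl_iff.1 (isOpen_setOf_res (¬P ·) n)

lemma isClosed_cyl (s : List ℕ) : IsClosed (cyl s) := by
  rw [show cyl s = {y | res y s.length = s} from ext fun _ => mem_cyl_iff]
  exact isClosed_setOf_res (· = s) s.length

section Big

variable {X : Set (ℕ → ℕ)}

def IsBig (X : Set (ℕ → ℕ)) (s : List ℕ) : Prop := ¬IsSigmaCompact (X ∩ cyl s)

def IsSplitting (X : Set (ℕ → ℕ)) (t : List ℕ) : Prop :=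
  IsBig X t ∧ {n | IsBig X (t ++ [n])}.Infinite

lemma IsBig.nonempty {s : List ℕ} (h : IsBig X s) : (X ∩ cyl s).Nonempty :=
  nonempty_iff_ne_empty.2 fun he => h (he ▸ isSigmaCompact_empty)

def bigKernel (X : Set (ℕ → ℕ)) (s : List ℕ) : Set (ℕ → ℕ) :=
  {y | y ∈ X ∩ cyl s ∧ ∀ m, IsBig X (res y m)}

lemma isSigmaCompact_inter_cyl_of_isCompact_bigKernel (hX : IsClosed X) {s : List ℕ}
    (hK : IsCompact (bigKernel X s)) : IsSigmaCompact (X ∩ cyl s) := by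
  have hcover : X ∩ cyl s ⊆ bigKernel X s ∪ ⋃ t : {t // ¬IsBig X t}, X ∩ cyl t := by
    intro y hy
    by_cases hall : ∀ m, IsBig X (res y m)
    · exact Or.inl ⟨hy, hall⟩
    · obtain ⟨m, hm⟩ := not_forall.1 hall
      exact Or.inr (mem_iUnion.2 ⟨⟨res y m, hm⟩, hy.1, mem_cyl_res y m⟩)
  have hσ : IsSigmaCompact (bigKernel X s ∪ ⋃ t : {t // ¬IsBig X t}, X ∩ cyl t) :=
    hK.isSigmaCompact.union (isSigmaCompact_iUnion _ fun t => not_not.1 t.2)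
  exact hσ.of_isClosed_subset (hX.inter (isClosed_cyl s)) hcover

/-- The big extensions of `s` form a finitely branching tree, so each of its levels is finite. -/
lemma finite_image_res_bigKernel {s : List ℕ}
    (h : ∀ t, s <+: t → IsBig X t → {n | IsBig X (t ++ [n])}.Finite) {m : ℕ}
    (hm : s.length ≤ m) : ((res · m) '' bigKernel X s).Finite := by
  induction m, hm using Nat.le_induction with
  | base =>
    refine (finite_singleton s).subset ?_
    rintro _ ⟨y, hy, rfl⟩
    exact mem_cyl_iff.1 hy.1.2
  | succ m hm ih =>
    refine (ih.biUnion (t := fun t => (t ++ [·]) '' {n | IsBig X (t ++ [n])})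
      fun t ht => ?_).subset ?_
    · obtain ⟨y, hy, rfl⟩ := ht
      refine (h _ ?_ (hy.2 m)).image _
      exact mem_cyl_iff.1 hy.1.2 ▸ res_prefix_res y hm
    · rintro _ ⟨y, hy, rfl⟩
      refine mem_biUnion (mem_image_of_mem _ hy) ⟨y m, ?_, (res_succ y m).symm⟩
      simpa only [mem_ofPred_eq, ← res_succ] using hy.2 (m + 1)

lemma isCompact_bigKernel (hX : IsClosed X) {s : List ℕ}
    (h : ∀ t, s <+: t → IsBig X t → {n | IsBig X (t ++ [n])}.Finite) :
    IsCompact (bigKernel X s) := by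
  have hbig : IsClosed {y | ∀ m, IsBig X (res y m)} := by
    simpa only [ofPred_forall] using isClosed_iInter fun m => isClosed_setOf_res (IsBig X) m
  have hclosed : IsClosed (bigKernel X s) := (hX.inter (isClosed_cyl s)).inter hbig
  refine isCompact_of_finite_image_eval hclosed fun i => ?_
  refine ((finite_image_res_bigKernel h (m := s.length + i + 1) (by omega)).image
    (·.getD i 0)).subset ?_
  rintro _ ⟨y, hy, rfl⟩
  exact ⟨_, mem_image_of_mem _ hy, by simp⟩

/-- The core of Hurewicz's theorem. -/
lemma IsBig.exists_isSplitting (hX : IsClosed X) {s : List ℕ} (hs : IsBig X s) :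
    ∃ t, s <+: t ∧ IsSplitting X t := by
  by_contra! h
  exact hs (isSigmaCompact_inter_cyl_of_isCompact_bigKernel hX (isCompact_bigKernel hX
    fun t hst ht => not_infinite.1 fun hinf => h t hst ⟨ht, hinf⟩))

lemma IsSplitting.exists_append_gt (hX : IsClosed X)
    (hmono : ∀ x ∈ X, StrictMono x) {u : List ℕ} (hu : IsSplitting X u) (m : ℕ) :
    ∃ w ≠ [], (∀ a ∈ w, m < a) ∧ IsSplitting X (u ++ w) := by
  obtain ⟨n, hn, hmn⟩ := hu.2.exists_gt m
  obtain ⟨_, ⟨r, rfl⟩, ht⟩ := hn.exists_isSplitting hX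
  refine ⟨n :: r, List.cons_ne_nil _ _, fun a ha => ?_, by simpa using ht⟩
  -- the entries of `n :: r` are values of an increasing point of `X` from position `|u|` on
  obtain ⟨x, hxX, hx⟩ := ht.1.nonempty
  obtain ⟨j, hj, rfl⟩ := List.getElem_of_mem ha
  have hxn : x u.length = n := by simpa using hx u.length (by simp)
  have hxj : x (u.length + j) = (n :: r)[j] := by
    simpa [List.getElem_append_right] using hx (u.length + j) (by simp at hj ⊢; omega)
  calc m < n := hmn
    _ = x u.length := hxn.symm
    _ ≤ x (u.length + j) := (hmono x hxX).monotone (Nat.le_add_right _ _)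
    _ = (n :: r)[j] := hxj

end Big

section Chain

variable {α : Type*} {u v : ℕ → List α}

lemma prefix_of_le (hu : ∀ k, u k <+: u (k + 1)) {i j : ℕ} (h : i ≤ j) : u i <+: u j := by
  induction j, h using Nat.le_induction with
  | base => exact List.prefix_refl _
  | succ j _ ih => exact ih.trans (hu j)

lemma self_le_length (hu : ∀ k, ∃ w ≠ [], u (k + 1) = u k ++ w) (k : ℕ) : k ≤ (u k).length :=
  StrictMono.id_le (strictMono_nat_of_lt_succ (f := fun k => (u k).length) fun k => by
    obtain ⟨w, hw, heq⟩ := hu k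
    simpa [heq] using List.length_pos_iff.2 hw) k

lemma iUnion_inter_iUnion_subset_of_interleaved [Preorder α]
    (hu : ∀ k, ∃ w, u (k + 1) = u k ++ w ∧ ∀ a ∈ w, ∀ b ∈ v k, b < a)
    (hv : ∀ k, ∃ w, v (k + 1) = v k ++ w ∧ ∀ b ∈ w, ∀ a ∈ u (k + 1), a < b) :
    (⋃ k, {a | a ∈ u k}) ∩ (⋃ k, {b | b ∈ v k}) ⊆ {a | a ∈ u 0} := by
  have hstep : ∀ k c, c ∈ u (k + 1) → c ∈ v (k + 1) → c ∈ u k ∧ c ∈ v k := by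
    intro k c hcu hcv
    obtain ⟨w, hw, hwv⟩ := hu k
    obtain ⟨w', hw', hw'u⟩ := hv k
    rw [hw', List.mem_append] at hcv
    have hcv : c ∈ v k := hcv.resolve_right fun h => lt_irrefl c (hw'u c h c hcu)
    rw [hw, List.mem_append] at hcu
    exact ⟨hcu.resolve_right fun h => lt_irrefl c (hwv c h c hcv), hcv⟩
  have hdiag : ∀ k c, c ∈ u k → c ∈ v k → c ∈ u 0 := by
    intro k
    induction k with
    | zero => exact fun c hc _ => hc
    | succ k ih => exact fun c hcu hcv => ih c (hstep k c hcu hcv).1 (hstep k c hcu hcv).2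
  have hpu : ∀ k, u k <+: u (k + 1) := fun k => let ⟨w, hw, _⟩ := hu k; ⟨w, hw.symm⟩
  have hpv : ∀ k, v k <+: v (k + 1) := fun k => let ⟨w, hw, _⟩ := hv k; ⟨w, hw.symm⟩
  rintro c ⟨hcu, hcv⟩
  obtain ⟨i, hi⟩ := mem_iUnion.1 hcu
  obtain ⟨j, hj⟩ := mem_iUnion.1 hcv
  exact hdiag (max i j) c ((prefix_of_le hpu (le_max_left i j)).subset hi)
    ((prefix_of_le hpv (le_max_right i j)).subset hj)

end Chain

section Branch

variable {u : ℕ → List ℕ}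

lemma exists_forall_mem_cyl (hu : ∀ k, ∃ w ≠ [], u (k + 1) = u k ++ w) :
    ∃ y : ℕ → ℕ, ∀ k, y ∈ cyl (u k) := by
  have hpre : ∀ k, u k <+: u (k + 1) := fun k => let ⟨w, _, hw⟩ := hu k; ⟨w, hw.symm⟩
  refine ⟨fun a => (u (a + 1)).getD a 0, fun k i hi => ?_⟩
  have hi' : i < (u (i + 1)).length := self_le_length hu (i + 1)
  show (u (i + 1)).getD i 0 = _
  rw [List.getD_eq_getElem _ _ hi']
  rcases le_total k (i + 1) with h | h
  · exact ((prefix_of_le hpre h).getElem hi).symm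
  · exact (prefix_of_le hpre h).getElem hi'

lemma mem_of_forall_mem_cyl {X : Set (ℕ → ℕ)} (hX : IsClosed X) (hlen : ∀ k, k ≤ (u k).length)
    (hne : ∀ k, (X ∩ cyl (u k)).Nonempty) {y : ℕ → ℕ} (hy : ∀ k, y ∈ cyl (u k)) : y ∈ X := by
  choose x hxX hxu using hne
  have hlim : Tendsto x atTop (𝓝 y) := tendsto_pi_nhds.2 fun i =>
    tendsto_atTop_of_eventually_const (i₀ := i + 1) fun k hk => by
      have hi : i < (u k).length := lt_of_lt_of_le hk (hlen k)
      rw [hxu k i hi, hy k i hi]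
  exact hX.mem_of_tendsto hlim (Eventually.of_forall hxX)

lemma exists_mem_range_subset {X : Set (ℕ → ℕ)} (hX : IsClosed X)
    (hu : ∀ k, ∃ w ≠ [], u (k + 1) = u k ++ w) (hne : ∀ k, (X ∩ cyl (u k)).Nonempty) :
    ∃ y ∈ X, range y ⊆ ⋃ k, {a | a ∈ u k} := by
  obtain ⟨y, hy⟩ := exists_forall_mem_cyl hu
  refine ⟨y, mem_of_forall_mem_cyl hX (self_le_length hu) hne hy, ?_⟩
  rintro _ ⟨a, rfl⟩
  have ha : a < (u (a + 1)).length := self_le_length hu (a + 1)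
  exact mem_iUnion.2 ⟨a + 1, by simp [hy (a + 1) a ha]⟩

end Branch

lemma exists_interleaved_chains {P : List ℕ → Prop}
    (hP : ∀ u, P u → ∀ m, ∃ w ≠ [], (∀ a ∈ w, m < a) ∧ P (u ++ w)) {t : List ℕ} (ht : P t) :
    ∃ u v : ℕ → List ℕ, (∀ k, P (u k) ∧ P (v k)) ∧
      (∀ k, ∃ w ≠ [], u (k + 1) = u k ++ w ∧ ∀ a ∈ w, ∀ b ∈ v k, b < a) ∧
      (∀ k, ∃ w ≠ [], v (k + 1) = v k ++ w ∧ ∀ b ∈ w, ∀ a ∈ u (k + 1), a < b) := by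
  choose! grow hne hgt hPext using hP
  -- `l.sum` bounds every entry of `l`, so each new block lies above all of the other branch
  let next : List ℕ × List ℕ → List ℕ × List ℕ := fun p =>
    let u' := p.1 ++ grow p.1 p.2.sum
    (u', p.2 ++ grow p.2 u'.sum)
  let p : ℕ → List ℕ × List ℕ := fun k => next^[k] (t, t)
  have hp_succ : ∀ k, p (k + 1) = next (p k) := fun k => Function.iterate_succ_apply' _ _ _
  have hp : ∀ k, P (p k).1 ∧ P (p k).2 := by
    intro k
    induction k with
    | zero => exact ⟨ht, ht⟩
    | succ k ih =>
      rw [hp_succ]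
      exact ⟨hPext _ ih.1 _, hPext _ ih.2 _⟩
  refine ⟨fun k => (p k).1, fun k => (p k).2, hp, fun k => ?_, fun k => ?_⟩
  · refine ⟨grow (p k).1 (p k).2.sum, hne _ (hp k).1 _, by show (p (k + 1)).1 = _; rw [hp_succ],
      fun a ha b hb => ?_⟩
    exact (List.le_sum_of_mem hb).trans_lt (hgt _ (hp k).1 _ a ha)
  · refine ⟨grow (p k).2 (p (k + 1)).1.sum, hne _ (hp k).2 _,
      by show (p (k + 1)).2 = _; rw [hp_succ], fun b hb a ha => ?_⟩
    exact (List.le_sum_of_mem ha).trans_lt (hgt _ (hp k).2 _ b hb)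

end Baire

open Baire

/-- Every closed subset `X` of `[ω]^ω` (viewed as the set of strictly increasing
elements of Baire space, via increasing enumerations) such that any two elements
of `X` have infinite intersection (of their ranges) is σ-compact. -/
theorem stmt0 (X : Set (ℕ → ℕ)) (hclosed : IsClosed X)
    (hmono : ∀ x ∈ X, StrictMono x)
    (hinter : ∀ x ∈ X, ∀ y ∈ X, (Set.range x ∩ Set.range y).Infinite) :
    IsSigmaCompact X := by
  by_contra hX
  have hroot : IsBig X [] := by simpa [IsBig] using hX
  obtain ⟨t, -, ht⟩ := hroot.exists_isSplitting hclosed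
  obtain ⟨u, v, hsplit, hu, hv⟩ :=
    exists_interleaved_chains (fun _ hu m => hu.exists_append_gt hclosed hmono m) ht
  obtain ⟨y, hyX, hy⟩ := exists_mem_range_subset hclosed
    (fun k => (hu k).imp fun _ h => ⟨h.1, h.2.1⟩) fun k => (hsplit k).1.1.nonempty
  obtain ⟨z, hzX, hz⟩ := exists_mem_range_subset hclosed
    (fun k => (hv k).imp fun _ h => ⟨h.1, h.2.1⟩) fun k => (hsplit k).2.1.nonempty
  refine hinter y hyX z hzX ((List.finite_toSet (u 0)).subset ?_)
  exact (inter_subset_inter hy hz).trans (iUnion_inter_iUnion_subset_of_interleaved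
    (fun k => (hu k).imp fun _ h => h.2) (fun k => (hv k).imp fun _ h => h.2))
end

section
/- If I is a maximal independent family on ω, then the closure of I in 2^ω (identifying sets with characteristic functions) is not an independent family; in particular there exists x in the closure of I with x ∉ I. -/
/-- Independent family on `ω`, with sets identified with their characteristic
functions in Cantor space `2^ω`: every finite Boolean combination is infinite. -/
def BoolIndep (I : Set (ℕ → Bool)) : Prop :=
  ∀ A B : Finset (ℕ → Bool), ↑A ⊆ I → ↑B ⊆ I → Disjoint A B →
    {n : ℕ | (∀ x ∈ A, x n = true) ∧ (∀ x ∈ B, x n = false)}.Infinite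

/-- Maximal independent family. -/
def MaxBoolIndep (I : Set (ℕ → Bool)) : Prop :=
  BoolIndep I ∧ ∀ J : Set (ℕ → Bool), BoolIndep J → I ⊆ J → J = I

/-!
It suffices to show that a maximal independent family `I` is not closed: then `closure I ≠ I`,
and by maximality `closure I` cannot be independent.

So let `I` be closed and independent. We build `x` such that every Boolean combination of `I`
meets both `x⁻¹' {true}` and `x⁻¹' {false}` in infinite sets; then `insert x I` is independent,
and `x ∉ I` (otherwise the combination `x` would have to meet `x⁻¹' {false}`). Fix sizes `a`, `b`
and a length `p`; the pairs of tuples `(f, g) ∈ Iᵃ × Iᵇ` with every `f i` differing from every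
`g i'` below `p` form a closed, hence compact, set, and each of them lies in the open set
`{(f, g) | ∀ i, f i n = true ∧ g i n = false}` for infinitely many `n`. So beyond any `j`, finitely
many `n` serve all such pairs at once. Handling every `(a, b, p, ε)` infinitely often, with
consecutive finite blocks on which `x` is constantly `ε`, gives `x`.
-/

open Set Filter

def blockBound (N : ℕ → ℕ → Finset ℕ) : ℕ → ℕ
  | 0 => 0
  | k + 1 => max (blockBound N k + 1) ((N k (blockBound N k)).sup id)

lemma strictMono_blockBound (N : ℕ → ℕ → Finset ℕ) : StrictMono (blockBound N) :=
  strictMono_nat_of_lt_succ fun _ => (Nat.lt_succ_self _).trans_le (le_max_left _ _)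

lemma le_blockBound_succ {N : ℕ → ℕ → Finset ℕ} {k n : ℕ} (hn : n ∈ N k (blockBound N k)) :
    n ≤ blockBound N (k + 1) :=
  le_max_of_le_right (Finset.le_sup (f := id) hn)

theorem exists_forall_exists_ge_forall_mem_eq {β : Type*} (N : ℕ → ℕ → Finset ℕ)
    (hN : ∀ k j, ∀ n ∈ N k j, j < n) (v : ℕ → β) :
    ∃ x : ℕ → β, ∀ k, ∃ j ≥ k, ∀ n ∈ N k j, x n = v k := by
  set m := blockBound N
  have hm : StrictMono m := strictMono_blockBound N
  have hblock : ∀ n, ∃ k, n ≤ m (k + 1) :=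
    fun n => ⟨n, (hm.id_le n).trans (hm.monotone n.le_succ)⟩
  -- `x` is `v k` on the `k`-th block `(m k, m (k + 1)]`, which contains `N k (m k)`.
  refine ⟨fun n => v (Nat.find (hblock n)), fun k => ⟨m k, hm.id_le k, fun n hn => ?_⟩⟩
  have hfind : Nat.find (hblock n) = k := by
    rw [Nat.find_eq_iff]
    refine ⟨le_blockBound_succ hn, fun k' hk' hle => ?_⟩
    have : m (k' + 1) ≤ m k := hm.monotone hk'
    have := hN k (m k) n hn
    omega
  simp only [hfind]

theorem exists_frequently_forall_mem_eq {R β : Type*} [Countable R] [Nonempty R]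
    (N : R → ℕ → Finset ℕ) (hN : ∀ r j, ∀ n ∈ N r j, j < n) (v : R → β) :
    ∃ x : ℕ → β, ∀ r, ∃ᶠ j in atTop, ∀ n ∈ N r j, x n = v r := by
  obtain ⟨e, he⟩ := exists_surjective_nat R
  obtain ⟨x, hx⟩ := exists_forall_exists_ge_forall_mem_eq (fun k => N (e k.unpair.1))
    (fun _ => hN _) (fun k => v (e k.unpair.1))
  refine ⟨x, fun r => frequently_atTop.2 fun K => ?_⟩
  obtain ⟨i, rfl⟩ := he r
  obtain ⟨j, hj, hxj⟩ := hx (Nat.pair i K)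
  exact ⟨j, (Nat.right_le_pair i K).trans hj, by simpa using hxj⟩

theorem IsCompact.exists_finset_gt_subcover {X : Type*} [TopologicalSpace X] {K : Set X}
    (hK : IsCompact K) {U : ℕ → Set X} (hU : ∀ n, IsOpen (U n))
    (hKU : ∀ x ∈ K, {n | x ∈ U n}.Infinite) (j : ℕ) :
    ∃ N : Finset ℕ, (∀ n ∈ N, j < n) ∧ K ⊆ ⋃ n ∈ N, U n := by
  obtain ⟨t, htj, htf, hcover⟩ := hK.elim_finite_subcover_image (b := Ioi j) (fun n _ => hU n)
    fun x hx => by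
      obtain ⟨n, hn, hjn⟩ := (hKU x hx).exists_gt j
      exact mem_biUnion hjn hn
  exact ⟨htf.toFinset, fun n hn => htj (htf.mem_toFinset.1 hn), by simpa using hcover⟩

lemma exists_lt_ne_of_disjoint {β : Type*} {A B : Finset (ℕ → β)} (hAB : Disjoint A B) :
    ∃ p, ∀ y ∈ A, ∀ z ∈ B, ∃ n < p, y n ≠ z n := by
  have hne : ∀ yz ∈ A ×ˢ B, ∃ n, yz.1 n ≠ yz.2 n := fun yz hyz =>
    Function.ne_iff.1 (Finset.disjoint_iff_ne.1 hAB _ (Finset.mem_product.1 hyz).1 _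
      (Finset.mem_product.1 hyz).2)
  choose! w hw using hne
  exact ⟨(A ×ˢ B).sup w + 1, fun y hy z hz =>
    ⟨w (y, z), Nat.lt_succ_of_le (Finset.le_sup (Finset.mem_product.2 ⟨hy, hz⟩)),
      hw (y, z) (Finset.mem_product.2 ⟨hy, hz⟩)⟩⟩

def boolComb (A B : Finset (ℕ → Bool)) : Set ℕ :=
  {n | (∀ x ∈ A, x n = true) ∧ (∀ x ∈ B, x n = false)}

def separatedPairs (I : Set (ℕ → Bool)) (a b p : ℕ) :
    Set ((Fin a → ℕ → Bool) × (Fin b → ℕ → Bool)) :=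
  {fg | (∀ i, fg.1 i ∈ I) ∧ (∀ i, fg.2 i ∈ I) ∧ ∀ i i', ∃ n : Fin p, fg.1 i n ≠ fg.2 i' n}

def SplitsBoolCombs (I : Set (ℕ → Bool)) (x : ℕ → Bool) : Prop :=
  ∀ A B : Finset (ℕ → Bool), ↑A ⊆ I → ↑B ⊆ I → Disjoint A B →
    ∀ ε : Bool, {n | n ∈ boolComb A B ∧ x n = ε}.Infinite

variable {I : Set (ℕ → Bool)}

lemma isCompact_separatedPairs (hI : IsClosed I) (a b p : ℕ) :
    IsCompact (separatedPairs I a b p) := by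
  refine IsClosed.isCompact ?_
  simp only [separatedPairs, ofPred_and, ofPred_forall, ofPred_exists]
  refine (isClosed_iInter fun i => ?_).inter ((isClosed_iInter fun i => ?_).inter
    (isClosed_iInter fun i => isClosed_iInter fun i' => isClosed_iUnion_of_finite fun n => ?_))
  · exact hI.preimage (by fun_prop)
  · exact hI.preimage (by fun_prop)
  · exact (isClosed_discrete {uv : Bool × Bool | uv.1 ≠ uv.2}).preimage
      (f := fun fg : (Fin a → ℕ → Bool) × (Fin b → ℕ → Bool) => (fg.1 i n, fg.2 i' n))
      (by fun_prop)

theorem BoolIndep.exists_finset_gt_cover (hInd : BoolIndep I) (hcl : IsClosed I)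
    (a b p j : ℕ) : ∃ N : Finset ℕ, (∀ n ∈ N, j < n) ∧ ∀ fg ∈ separatedPairs I a b p,
      ∃ n ∈ N, (∀ i, fg.1 i n = true) ∧ ∀ i, fg.2 i n = false := by
  set U : ℕ → Set ((Fin a → ℕ → Bool) × (Fin b → ℕ → Bool)) :=
    fun n => {fg | (∀ i, fg.1 i n = true) ∧ ∀ i, fg.2 i n = false}
  have hU : ∀ n, IsOpen (U n) := fun n => by
    simp only [U, ofPred_and, ofPred_forall]
    refine (isOpen_iInter_of_finite fun i => ?_).inter (isOpen_iInter_of_finite fun i => ?_)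
    · exact (isOpen_discrete {true}).preimage (by fun_prop)
    · exact (isOpen_discrete {false}).preimage (by fun_prop)
  have hinf : ∀ fg ∈ separatedPairs I a b p, {n | fg ∈ U n}.Infinite := by
    classical
    rintro fg ⟨hf, hg, hsep⟩
    refine (hInd (Finset.univ.image fg.1) (Finset.univ.image fg.2) ?_ ?_ ?_).mono ?_
    · simpa [range_subset_iff] using hf
    · simpa [range_subset_iff] using hg
    · simp only [Finset.disjoint_left, Finset.mem_image, Finset.mem_univ, true_and]
      rintro _ ⟨i, rfl⟩ ⟨i', hi'⟩
      obtain ⟨n, hn⟩ := hsep i i'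
      exact hn (by rw [hi'])
    · intro n hn
      simpa [U] using hn
  obtain ⟨N, hN, hcover⟩ :=
    (isCompact_separatedPairs hcl a b p).exists_finset_gt_subcover hU hinf j
  refine ⟨N, hN, fun fg hfg => ?_⟩
  obtain ⟨n, hnN, hn⟩ := mem_iUnion₂.1 (hcover hfg)
  exact ⟨n, hnN, hn⟩

theorem BoolIndep.exists_splitsBoolCombs (hInd : BoolIndep I) (hcl : IsClosed I) :
    ∃ x, SplitsBoolCombs I x := by
  choose N hN hcover using
    fun r : ℕ × ℕ × ℕ × Bool => hInd.exists_finset_gt_cover hcl r.1 r.2.1 r.2.2.1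
  obtain ⟨x, hx⟩ := exists_frequently_forall_mem_eq N hN fun r => r.2.2.2
  refine ⟨x, fun A B hA hB hAB ε => ?_⟩
  obtain ⟨p, hp⟩ := exists_lt_ne_of_disjoint hAB
  set f : Fin A.card → ℕ → Bool := fun i => A.equivFin.symm i
  set g : Fin B.card → ℕ → Bool := fun i => B.equivFin.symm i
  have hfg : (f, g) ∈ separatedPairs I A.card B.card p := by
    refine ⟨fun i => hA (A.equivFin.symm i).2, fun i => hB (B.equivFin.symm i).2, fun i i' => ?_⟩
    obtain ⟨n, hnp, hn⟩ := hp _ (A.equivFin.symm i).2 _ (B.equivFin.symm i').2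
    exact ⟨⟨n, hnp⟩, hn⟩
  refine infinite_of_forall_exists_gt fun K => ?_
  obtain ⟨j, hKj, hxj⟩ := frequently_atTop.1 (hx (A.card, B.card, p, ε)) K
  obtain ⟨n, hnN, hfn, hgn⟩ := hcover (A.card, B.card, p, ε) j (f, g) hfg
  refine ⟨n, ⟨⟨fun y hy => ?_, fun z hz => ?_⟩, hxj n hnN⟩, hKj.trans_lt (hN _ j n hnN)⟩
  · simpa [f] using hfn (A.equivFin ⟨y, hy⟩)
  · simpa [g] using hgn (B.equivFin ⟨z, hz⟩)

theorem SplitsBoolCombs.notMem {x : ℕ → Bool} (hx : SplitsBoolCombs I x) : x ∉ I :=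
  fun hxI => hx {x} ∅ (by simpa using hxI) (by simp) (by simp) false (by simp [boolComb])

theorem SplitsBoolCombs.boolIndep_insert {x : ℕ → Bool} (hx : SplitsBoolCombs I x) :
    BoolIndep (insert x I) := by
  classical
  intro A B hA hB hAB
  have herase : ∀ C : Finset (ℕ → Bool), ↑C ⊆ insert x I → ↑(C.erase x) ⊆ I := fun C hC y hy =>
    (hC (Finset.mem_of_mem_erase hy)).resolve_left (Finset.ne_of_mem_erase hy)
  refine (hx _ _ (herase A hA) (herase B hB)
    (hAB.mono (Finset.erase_subset _ _) (Finset.erase_subset _ _)) (decide (x ∈ A))).mono ?_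
  rintro n ⟨⟨hAn, hBn⟩, hxn⟩
  refine ⟨fun y hy => ?_, fun y hy => ?_⟩
  · by_cases hyx : y = x
    · subst hyx; simpa [hy] using hxn
    · exact hAn y (Finset.mem_erase.2 ⟨hyx, hy⟩)
  · by_cases hyx : y = x
    · subst hyx; simpa [Finset.disjoint_right.1 hAB hy] using hxn
    · exact hBn y (Finset.mem_erase.2 ⟨hyx, hy⟩)

theorem MaxBoolIndep.not_isClosed (hI : MaxBoolIndep I) : ¬ IsClosed I := fun hcl => by
  obtain ⟨x, hx⟩ := hI.1.exists_splitsBoolCombs hcl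
  exact hx.notMem (hI.2 _ hx.boolIndep_insert (subset_insert x I) ▸ mem_insert x I)

/-- If `I` is a maximal independent family, then the closure of `I` in `2^ω`
is not an independent family; in particular some point of the closure of `I`
does not belong to `I`. -/
theorem stmt3 (I : Set (ℕ → Bool)) (hI : MaxBoolIndep I) :
    ¬ BoolIndep (closure I) ∧ ∃ x ∈ closure I, x ∉ I := by
  refine ⟨fun h => hI.not_isClosed ?_, ?_⟩
  · exact closure_eq_iff_isClosed.1 (hI.2 _ h subset_closure)
  · by_contra! h
    exact hI.not_isClosed (closure_subset_iff_isClosed.1 h)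
end

section
/- The dominating number d is less than or equal to i_cl, the least cardinality of a collection of closed subsets of P(ω) whose union is a maximal independent family. -/
/-- The dominating number `𝔡`: the least cardinality of a family `D ⊆ ω^ω` such
that every `f` is eventually strictly below some member of `D`. -/
noncomputable def domNumber : Cardinal :=
  sInf {c : Cardinal | ∃ D : Set (ℕ → ℕ), c = Cardinal.mk D ∧
    ∀ f : ℕ → ℕ, ∃ g ∈ D, ∀ᶠ n in Filter.atTop, f n < g n}

/-- `𝔦_cl`: the least cardinality of a collection of closed subsets of `2^ω`
whose union is a maximal independent family. -/
noncomputable def iCl : Cardinal :=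
  sInf {c : Cardinal | ∃ (ι : Type) (C : ι → Set (ℕ → Bool)), c = Cardinal.mk ι ∧
    (∀ i, IsClosed (C i)) ∧ MaxBoolIndep (⋃ i, C i)}

/-!
Let `I = ⋃ i, C i` be a maximal independent family with every `C i` closed, and fix members
`A j ∈ I` converging to an accumulation point of `I`. For a finite list of pieces `C i` with
prescribed values, compactness gives for each `j` a bound `G j`: any members of these pieces that
differ from each other and from `A j` on an initial segment realise the prescribed values,
together with a prescribed value of `A j`, at some point of `(j, G j]`. These `|ι| · ℵ₀`
functions dominate. Otherwise some `u` escapes all of them; cut `ℕ` into intervals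
`[h k, h (k + 1))` that grow with `u` and let `Y` copy `A (h k)` on the `k`-th interval. Then `Y`
splits every Boolean combination of members of `I` into two infinite parts, against maximality.
As `𝔡` is uncountable, `𝔡 ≤ |ι|`.
-/

open Filter Set Function Cardinal Topology

theorem BoolIndep.infinite_setOf_forall_eq {I : Set (ℕ → Bool)} (hI : BoolIndep I)
    {κ : Type*} [Finite κ] {x : κ → ℕ → Bool} (hx : Injective x) (hxI : ∀ i, x i ∈ I)
    (s : κ → Bool) : {n | ∀ i, x i n = s i}.Infinite := by
  classical
  have := Fintype.ofFinite κ
  refine (hI ((Finset.univ.filter (s · = true)).image x)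
    ((Finset.univ.filter (s · = false)).image x) ?_ ?_ ?_).mono ?_
  · simp [Set.subset_def, hxI]
  · simp [Set.subset_def, hxI]
  · simp only [Finset.disjoint_left, Finset.mem_image, Finset.mem_filter, Finset.mem_univ,
      true_and]
    rintro _ ⟨i, hi, rfl⟩ ⟨i', hi', hii'⟩
    rw [hx hii'] at hi'
    simp_all
  · rintro n ⟨htrue, hfalse⟩ i
    cases h : s i
    · exact hfalse _ (Finset.mem_image_of_mem _ (by simpa using h))
    · exact htrue _ (Finset.mem_image_of_mem _ (by simpa using h))

theorem boolIndep_iff_forall_finset {I : Set (ℕ → Bool)} :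
    BoolIndep I ↔ ∀ F : Finset (ℕ → Bool), ↑F ⊆ I → ∀ s : (ℕ → Bool) → Bool,
      {n | ∀ x ∈ F, x n = s x}.Infinite := by
  classical
  refine ⟨fun hI F hF s => ?_, fun H A B hA hB hAB => ?_⟩
  · simpa using hI.infinite_setOf_forall_eq Subtype.val_injective (fun x : F => hF x.2)
      (s ∘ Subtype.val)
  · refine (H (A ∪ B) (by simp [hA, hB]) (fun x => decide (x ∈ A))).mono fun n hn => ⟨?_, ?_⟩
    · exact fun x hx => by simpa [hx] using hn x (Finset.mem_union_left _ hx)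
    · exact fun x hx => by
        simpa [Finset.disjoint_right.1 hAB hx] using hn x (Finset.mem_union_right _ hx)

theorem isOfFiniteCharacter_boolIndep : Order.IsOfFiniteCharacter {I | BoolIndep I} := by
  refine fun I => ⟨fun hI J hJI _ A B hA hB => hI A B (hA.trans hJI) (hB.trans hJI),
    fun H A B hA hB => ?_⟩
  exact H (↑A ∪ ↑B) (union_subset hA hB) (A.finite_toSet.union B.finite_toSet) A B
    subset_union_left subset_union_right

theorem exists_maxBoolIndep : ∃ I, MaxBoolIndep I := by
  have hempty : BoolIndep ∅ := fun A B hA hB _ => by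
    obtain rfl : A = ∅ := by simpa using hA
    obtain rfl : B = ∅ := by simpa using hB
    simpa using Set.infinite_univ
  obtain ⟨I, -, hI⟩ := isOfFiniteCharacter_boolIndep.exists_maximal hempty
  exact ⟨I, hI.prop, fun J hJ hIJ => (hI.eq_of_subset hJ hIJ).symm⟩

def SplitsCells (I : Set (ℕ → Bool)) (Y : ℕ → Bool) : Prop :=
  ∀ F : Finset (ℕ → Bool), ↑F ⊆ I → ∀ (s : (ℕ → Bool) → Bool) (b : Bool),
    {n | (∀ x ∈ F, x n = s x) ∧ Y n = b}.Infinite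

theorem MaxBoolIndep.not_splitsCells {I : Set (ℕ → Bool)} (hI : MaxBoolIndep I) (Y : ℕ → Bool) :
    ¬ SplitsCells I Y := by
  classical
  intro hY
  have hYI : BoolIndep (insert Y I) := by
    refine boolIndep_iff_forall_finset.2 fun F hF s => ?_
    have hF' : ↑(F.erase Y) ⊆ I := fun x hx => by
      simpa [(Finset.mem_erase.1 hx).1] using hF (Finset.mem_of_mem_erase hx)
    refine (hY _ hF' s (s Y)).mono ?_
    rintro n ⟨hn, hYn⟩ x hx
    obtain rfl | hxY := eq_or_ne x Y
    · exact hYn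
    · exact hn x (Finset.mem_erase.2 ⟨hxY, hx⟩)
  have hYmem : Y ∈ I := hI.2 _ hYI (subset_insert Y I) ▸ mem_insert Y I
  simpa using hY {Y} (by simpa using hYmem) (fun _ => true) false

theorem Nat.infinite_setOf_decide_odd_count_eq {p : ℕ → Prop} [DecidablePred p]
    (hp : {n | p n}.Infinite) (b : Bool) :
    {n | p n ∧ decide (Odd (Nat.count p n)) = b}.Infinite := by
  refine Set.infinite_of_injective_forall_mem (f := fun k => Nat.nth p (2 * k + b.toNat))
    ((Nat.nth_injective hp).comp fun k k' h => by simpa using h) fun k => ?_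
  refine ⟨Nat.nth_mem_of_infinite hp _, ?_⟩
  rw [Nat.count_nth_of_infinite hp]
  cases b <;> simp [parity_simps]

theorem BoolIndep.exists_splitsCells_of_finite {I : Set (ℕ → Bool)} (hI : BoolIndep I)
    (hfin : I.Finite) : ∃ Y, SplitsCells I Y := by
  set F₀ := hfin.toFinset
  -- `Y` alternates along the increasing enumeration of each atom of `I`.
  refine ⟨fun n => decide (Odd (Nat.count (fun m => ∀ x ∈ F₀, x m = x n) n)),
    fun F hF s b => ?_⟩
  have hcell : {n | ∀ x ∈ F₀, x n = s x}.Infinite :=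
    boolIndep_iff_forall_finset.1 hI F₀ (by simp [F₀]) s
  refine (Nat.infinite_setOf_decide_odd_count_eq hcell b).mono ?_
  rintro n ⟨hn, hYn⟩
  refine ⟨fun x hx => hn x (hfin.mem_toFinset.2 (hF hx)), ?_⟩
  have hatom : (fun m => ∀ x ∈ F₀, x m = x n) = fun m => ∀ x ∈ F₀, x m = s x :=
    funext fun m => propext (forall₂_congr fun x hx => by rw [hn x hx])
  simpa only [hatom] using hYn

def DiffersBelow (w : ℕ) (u v : ℕ → Bool) : Prop :=
  ∃ m < w, u m ≠ v m

theorem DiffersBelow.ne {w : ℕ} {u v : ℕ → Bool} (h : DiffersBelow w u v) : u ≠ v :=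
  fun huv => let ⟨m, _, hm⟩ := h; hm (congrFun huv m)

theorem DiffersBelow.symm {w : ℕ} {u v : ℕ → Bool} (h : DiffersBelow w u v) :
    DiffersBelow w v u :=
  let ⟨m, hmw, hm⟩ := h; ⟨m, hmw, hm.symm⟩

theorem eventually_differsBelow {u v : ℕ → Bool} (h : u ≠ v) :
    ∀ᶠ w in atTop, DiffersBelow w u v := by
  obtain ⟨m, hm⟩ := Function.ne_iff.1 h
  exact eventually_atTop.2 ⟨m + 1, fun w hw => ⟨m, hw, hm⟩⟩

theorem isClosed_setOf_pairwise_differsBelow {κ : Type*} [Finite κ] (w : ℕ) :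
    IsClosed {x : κ → ℕ → Bool | Pairwise fun i i' => DiffersBelow w (x i) (x i')} := by
  have hcont : Continuous fun (x : κ → ℕ → Bool) (i : κ) (m : Fin w) => x i m := by fun_prop
  convert (isClosed_discrete {y : κ → Fin w → Bool | Pairwise fun i i' => y i ≠ y i'}).preimage
    hcont using 1
  ext x
  simp [DiffersBelow, Function.ne_iff, Fin.exists_iff]

theorem Set.Infinite.exists_seq_eventually_differsBelow {I : Set (ℕ → Bool)} (hI : I.Infinite) :
    ∃ (A : ℕ → ℕ → Bool) (N : ℕ → ℕ), (∀ j, A j ∈ I) ∧ Tendsto N atTop atTop ∧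
      ∀ x, ∀ᶠ j in atTop, DiffersBelow (N j) x (A j) := by
  obtain ⟨a, ha⟩ := hI.exists_accPt_principal
  have hnear : ∀ j, ∃ y ∈ I, ∃ n, j ≤ n ∧ (∀ m < j, y m = a m) ∧ y n ≠ a n := by
    intro j
    have hU : {y : ℕ → Bool | ∀ m < j, y m = a m} ∈ 𝓝 a :=
      (isOpen_set_pi (Set.finite_Iio j) fun m _ => isOpen_discrete {a m}).mem_nhds
        fun _ _ => rfl
    obtain ⟨y, ⟨hyU, hyI⟩, hya⟩ := accPt_iff_nhds.1 ha _ hU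
    obtain ⟨n, hn⟩ := Function.ne_iff.1 hya
    exact ⟨y, hyI, n, not_lt.1 fun hnj => hn (hyU n hnj), hyU, hn⟩
  choose A hAI n hjn hAa hAn using hnear
  refine ⟨A, fun j => n j + 1, hAI,
    tendsto_atTop_mono (fun j => (hjn j).trans (n j).le_succ) tendsto_id, fun x => ?_⟩
  obtain rfl | hxa := eq_or_ne x a
  · exact Eventually.of_forall fun j => ⟨n j, Nat.lt_succ_self _, (hAn j).symm⟩
  · obtain ⟨w, hw⟩ := Function.ne_iff.1 hxa
    filter_upwards [eventually_gt_atTop w] with j hj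
    exact ⟨w, by have := hjn j; omega, by rwa [hAa j w hj]⟩

/-- Distinctness of the members of a tuple is not a closed condition, but differing below a fixed
`w` is: this makes the admissible tuples a compact set. -/
theorem BoolIndep.exists_bound {I : Set (ℕ → Bool)} (hI : BoolIndep I) {κ : Type*} [Finite κ]
    {K : κ → Set (ℕ → Bool)} (hK : ∀ i, IsClosed (K i)) (hKI : ∀ i, K i ⊆ I) (s : κ → Bool)
    (w j : ℕ) :
    ∃ M, ∀ x : κ → ℕ → Bool, (∀ i, x i ∈ K i) →
      (Pairwise fun i i' => DiffersBelow w (x i) (x i')) →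
      ∃ m, j < m ∧ m ≤ M ∧ ∀ i, x i m = s i := by
  have hcpt : IsCompact (univ.pi K ∩
      {x | Pairwise fun i i' => DiffersBelow w (x i) (x i')}) :=
    ((isClosed_set_pi fun i _ => hK i).inter (isClosed_setOf_pairwise_differsBelow w)).isCompact
  have hopen : ∀ M, IsOpen {x : κ → ℕ → Bool | ∃ m, j < m ∧ m ≤ M ∧ ∀ i, x i m = s i} := by
    intro M
    simp only [ofPred_exists, ofPred_and, ofPred_forall]
    exact isOpen_iUnion fun m => isOpen_const.inter <| isOpen_const.inter <|
      isOpen_iInter_of_finite fun i => (isOpen_discrete {s i}).preimage (by fun_prop)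
  obtain ⟨M, hM⟩ := hcpt.elim_directed_cover _ hopen
    (by
      rintro x ⟨hxK, hx⟩
      have hinj : Injective x := fun i i' h => by_contra fun hne => (hx hne).ne h
      obtain ⟨m, hm, hjm⟩ :=
        (hI.infinite_setOf_forall_eq hinj (fun i => hKI i (hxK i trivial)) s).exists_gt j
      exact mem_iUnion.2 ⟨m, m, hjm, le_rfl, hm⟩)
    (Monotone.directed_le fun M M' hMM' => by
      rintro x ⟨m, hjm, hmM, hm⟩
      exact ⟨m, hjm, hmM.trans hMM', hm⟩)
  exact ⟨M, fun x hxK hx => hM ⟨fun i _ => hxK i, hx⟩⟩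

def intervalSeq (g : ℕ → ℕ) : ℕ → ℕ
  | 0 => 0
  | k + 1 => g (intervalSeq g k) + intervalSeq g k + 1

section IntervalSeq

variable (g : ℕ → ℕ)

theorem intervalSeq_strictMono : StrictMono (intervalSeq g) :=
  strictMono_nat_of_lt_succ fun k => by simp only [intervalSeq]; omega

theorem lt_intervalSeq_succ (k : ℕ) : g (intervalSeq g k) < intervalSeq g (k + 1) := by
  simp only [intervalSeq]; omega

theorem exists_lt_intervalSeq_succ (m : ℕ) : ∃ k, m < intervalSeq g (k + 1) :=
  ⟨m, (intervalSeq_strictMono g).le_apply.trans_lt (intervalSeq_strictMono g m.lt_succ_self)⟩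

def intervalIndex (m : ℕ) : ℕ :=
  Nat.find (exists_lt_intervalSeq_succ g m)

theorem intervalSeq_intervalIndex_le (m : ℕ) : intervalSeq g (intervalIndex g m) ≤ m := by
  rcases h : intervalIndex g m with _ | k
  · simp [intervalSeq]
  · exact not_lt.1 (Nat.find_min (exists_lt_intervalSeq_succ g m)
      (show k < intervalIndex g m by omega))

theorem lt_intervalSeq_intervalIndex_succ (m : ℕ) :
    m < intervalSeq g (intervalIndex g m + 1) :=
  Nat.find_spec (exists_lt_intervalSeq_succ g m)

theorem intervalIndex_eq {k m : ℕ} (hkm : intervalSeq g k ≤ m)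
    (hmk : m < intervalSeq g (k + 1)) : intervalIndex g m = k :=
  (Nat.find_eq_iff _).2 ⟨hmk, fun _ hnk hmn =>
    (hkm.trans_lt hmn).not_ge ((intervalSeq_strictMono g).monotone hnk)⟩

end IntervalSeq

theorem frequently_lt_intervalSeq_succ {F : ℕ → ℕ} (hF : Monotone F) {g : ℕ → ℕ}
    (hg : Monotone g) (hfreq : ∃ᶠ j in atTop, F (F j) ≤ g j) :
    ∃ᶠ k in atTop, F (intervalSeq g k) < intervalSeq g (k + 1) := by
  intro hev
  obtain ⟨K, hK⟩ := eventually_atTop.1 hev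
  simp only [not_lt] at hK
  obtain ⟨j, hKj, hj⟩ := frequently_atTop.1 hfreq (intervalSeq g K)
  set k := intervalIndex g j
  have hjk := lt_intervalSeq_intervalIndex_succ g j
  have hKk : K ≤ k :=
    Nat.lt_succ_iff.1 ((intervalSeq_strictMono g).lt_iff_lt.1 (hKj.trans_lt hjk))
  have hnext : intervalSeq g (k + 1) ≤ F j :=
    (hK k hKk).trans (hF (intervalSeq_intervalIndex_le g j))
  have hcontra : intervalSeq g (k + 2) < intervalSeq g (k + 2) :=
    calc intervalSeq g (k + 2)
        ≤ F (F j) := (hK (k + 1) (hKk.trans k.le_succ)).trans (hF hnext)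
      _ ≤ g j := hj
      _ ≤ g (intervalSeq g (k + 1)) := hg hjk.le
      _ < intervalSeq g (k + 2) := lt_intervalSeq_succ g (k + 1)
  exact hcontra.false

section Pattern

variable {ι : Type*} {C : ι → Set (ℕ → Bool)}

def PatternBound (C : ι → Set (ℕ → Bool)) (a : ℕ → Bool) (w j : ℕ) {r : ℕ}
    (c : Fin r → ι × Bool) (b : Bool) (M : ℕ) : Prop :=
  ∀ x : Fin r → ℕ → Bool, (∀ k, x k ∈ C (c k).1) →
    (Pairwise fun k k' => DiffersBelow w (x k) (x k')) → (∀ k, DiffersBelow w (x k) a) →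
    ∃ m, j < m ∧ m ≤ M ∧ a m = b ∧ ∀ k, x k m = (c k).2

theorem PatternBound.mono {a : ℕ → Bool} {w j r : ℕ} {c : Fin r → ι × Bool} {b : Bool}
    {M M' : ℕ} (h : PatternBound C a w j c b M) (hMM' : M ≤ M') :
    PatternBound C a w j c b M' := fun x hxC hx hxa =>
  let ⟨m, hjm, hmM, hm⟩ := h x hxC hx hxa
  ⟨m, hjm, hmM.trans hMM', hm⟩

theorem exists_patternBound (hC : ∀ i, IsClosed (C i)) (hI : BoolIndep (⋃ i, C i))
    {a : ℕ → Bool} (ha : a ∈ ⋃ i, C i) (w j : ℕ) {r : ℕ} (c : Fin r → ι × Bool) (b : Bool) :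
    ∃ M, PatternBound C a w j c b M := by
  obtain ⟨M, hM⟩ := hI.exists_bound (K := fun o : Option (Fin r) => o.elim {a} fun k => C (c k).1)
    (fun o => o.casesOn isClosed_singleton fun k => hC _)
    (fun o => o.casesOn (singleton_subset_iff.2 ha) fun k => subset_iUnion C _)
    (fun o => o.elim b fun k => (c k).2) w j
  refine ⟨M, fun x hxC hx hxa => ?_⟩
  obtain ⟨m, hjm, hmM, hm⟩ := hM (fun o => o.elim a x) (fun o => o.casesOn rfl hxC) <| by
    rintro (_ | k) (_ | k') hne
    exacts [absurd rfl hne, (hxa k').symm, hxa k, hx fun h => hne (congrArg some h)]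
  exact ⟨m, hjm, hmM, hm none, fun k => hm (some k)⟩

theorem exists_monotone_patternBound (hC : ∀ i, IsClosed (C i)) (hI : BoolIndep (⋃ i, C i))
    {A : ℕ → ℕ → Bool} (hA : ∀ j, A j ∈ ⋃ i, C i) (N : ℕ → ℕ) {r : ℕ} (c : Fin r → ι × Bool)
    (b : Bool) : ∃ G : ℕ → ℕ, Monotone G ∧ ∀ j, PatternBound C (A j) (N j) j c b (G j) := by
  choose M hM using fun j => exists_patternBound hC hI (hA j) (N j) j c b
  exact ⟨partialSups M, (partialSups M).monotone, fun j => (hM j).mono (le_partialSups M j)⟩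

theorem splitsCells_of_patternBound {A : ℕ → ℕ → Bool} {N : ℕ → ℕ}
    (hN : Tendsto N atTop atTop) (hA : ∀ x, ∀ᶠ j in atTop, DiffersBelow (N j) x (A j))
    {G : (Σ r, Fin r → ι × Bool) × Bool → ℕ → ℕ} (hGmono : ∀ t, Monotone (G t))
    (hG : ∀ t j, PatternBound C (A j) (N j) j t.1.2 t.2 (G t j)) {g : ℕ → ℕ} (hg : Monotone g)
    (hfreq : ∀ t, ∃ᶠ j in atTop, G t (G t j) ≤ g j) :
    SplitsCells (⋃ i, C i) fun m => A (intervalSeq g (intervalIndex g m)) m := by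
  intro F hF s b
  choose idx hidx using fun x : F => mem_iUnion.1 (hF x.2)
  set e := F.equivFin.symm
  set t : (Σ r, Fin r → ι × Bool) × Bool := (⟨F.card, fun k => (idx (e k), s (e k))⟩, b)
  have hsep : ∀ᶠ j in atTop, ∀ x ∈ F, ∀ y ∈ F, x ≠ y → DiffersBelow (N j) x y := by
    refine (eventually_all_finset F).2 fun x _ => (eventually_all_finset F).2 fun y _ => ?_
    by_cases hxy : x = y
    · exact Eventually.of_forall fun _ h => absurd hxy h
    · exact (hN.eventually (eventually_differsBelow hxy)).mono fun _ h _ => h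
  have hfar : ∀ᶠ j in atTop, ∀ x ∈ F, DiffersBelow (N j) x (A j) :=
    (eventually_all_finset F).2 fun x _ => hA x
  refine infinite_of_forall_exists_gt fun a => ?_
  obtain ⟨k, hGk, ⟨hsepk, hfark⟩, hak⟩ :=
    ((frequently_lt_intervalSeq_succ (hGmono t) hg (hfreq t)).and_eventually
      (((intervalSeq_strictMono g).tendsto_atTop.eventually (hsep.and hfar)).and
        (eventually_ge_atTop a))).exists
  obtain ⟨m, hkm, hmG, hAm, hxm⟩ := hG t (intervalSeq g k) (fun k' => e k') (fun k' => hidx (e k'))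
    (fun k' k'' hne => hsepk _ (e k').2 _ (e k'').2 fun h => hne (e.injective (Subtype.ext h)))
    (fun k' => hfark _ (e k').2)
  refine ⟨m, ⟨fun x hx => ?_, ?_⟩, ?_⟩
  · obtain ⟨k', hk'⟩ := e.surjective ⟨x, hx⟩
    simpa [t, hk'] using hxm k'
  · simpa [intervalIndex_eq g hkm.le (hmG.trans_lt hGk)] using hAm
  · exact hak.trans_lt (((intervalSeq_strictMono g).le_apply).trans_lt hkm)

end Pattern

theorem mk_sigma_fin_prod_bool_le (ι : Type) :
    #((Σ r, Fin r → ι × Bool) × Bool) ≤ max #ι ℵ₀ := by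
  have hbool : #Bool ≤ max #ι ℵ₀ := mk_le_aleph0.trans (le_max_right _ _)
  have hpair : #(ι × Bool) ≤ max #ι ℵ₀ := by
    rw [mk_prod, lift_id, lift_id]
    exact mul_le_of_le (le_max_right _ _) (le_max_left _ _) hbool
  have htuple : #(Σ r, Fin r → ι × Bool) ≤ max #ι ℵ₀ := by
    rw [← mk_congr List.equivSigmaTuple]
    exact (mk_list_le_max _).trans (max_le (le_max_right _ _) hpair)
  rw [mk_prod, lift_id, lift_id]
  exact mul_le_of_le (le_max_right _ _) htuple hbool

theorem exists_dominating_of_maxBoolIndep {ι : Type} {C : ι → Set (ℕ → Bool)}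
    (hC : ∀ i, IsClosed (C i)) (hmax : MaxBoolIndep (⋃ i, C i)) :
    ∃ D : Set (ℕ → ℕ), #D ≤ max #ι ℵ₀ ∧ ∀ f : ℕ → ℕ, ∃ g ∈ D, ∀ᶠ n in atTop, f n < g n := by
  have hinf : (⋃ i, C i).Infinite := fun hfin =>
    let ⟨Y, hY⟩ := hmax.1.exists_splitsCells_of_finite hfin
    hmax.not_splitsCells Y hY
  obtain ⟨A, N, hAI, hN, hA⟩ := hinf.exists_seq_eventually_differsBelow
  choose G hGmono hG using fun t : (Σ r, Fin r → ι × Bool) × Bool =>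
    exists_monotone_patternBound hC hmax.1 hAI N t.1.2 t.2
  refine ⟨range fun t => G t ∘ G t, mk_range_le.trans (mk_sigma_fin_prod_bool_le ι),
    fun u => ?_⟩
  by_contra! hu
  have hfreq : ∀ t, ∃ᶠ j in atTop, G t (G t j) ≤ partialSups u j := fun t =>
    (hu _ ⟨t, rfl⟩).mono fun j hj => hj.trans (le_partialSups u j)
  exact hmax.not_splitsCells _
    (splitsCells_of_patternBound hN hA hGmono hG (partialSups u).monotone hfreq)

theorem Set.Countable.exists_forall_eventually_lt {D : Set (ℕ → ℕ)} (hD : D.Countable) :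
    ∃ f : ℕ → ℕ, ∀ g ∈ D, ∀ᶠ n in atTop, g n < f n := by
  rcases D.eq_empty_or_nonempty with rfl | hne
  · exact ⟨0, by simp⟩
  obtain ⟨u, rfl⟩ := hD.exists_eq_range hne
  refine ⟨fun n => (Finset.range (n + 1)).sup (fun i => u i n) + 1, ?_⟩
  rintro _ ⟨i, rfl⟩
  filter_upwards [eventually_ge_atTop i] with n hin
  exact Nat.lt_succ_of_le (Finset.le_sup (f := fun i => u i n) (Finset.mem_range.2 (by omega)))

theorem domNumber_le_mk {D : Set (ℕ → ℕ)}
    (hD : ∀ f : ℕ → ℕ, ∃ g ∈ D, ∀ᶠ n in atTop, f n < g n) : domNumber ≤ #D :=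
  csInf_le' ⟨D, rfl, hD⟩

theorem aleph0_lt_domNumber : ℵ₀ < domNumber := by
  obtain ⟨D, hD, hdom⟩ := csInf_mem (s := {c : Cardinal | ∃ D : Set (ℕ → ℕ), c = #D ∧
      ∀ f : ℕ → ℕ, ∃ g ∈ D, ∀ᶠ n in atTop, f n < g n})
    ⟨_, univ, rfl, fun f => ⟨f + 1, mem_univ _, Eventually.of_forall fun n => by simp⟩⟩
  rw [domNumber, hD, ← not_le, le_aleph0_iff_set_countable]
  intro hcount
  obtain ⟨f, hf⟩ := hcount.exists_forall_eventually_lt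
  obtain ⟨g, hg, hfg⟩ := hdom f
  obtain ⟨n, hgf, hfg⟩ := ((hf g hg).and hfg).exists
  exact (hgf.trans hfg).false


/-- `𝔡 ≤ 𝔦_cl`. -/
theorem stmt4 : domNumber ≤ iCl := by
  obtain ⟨I, hI⟩ := exists_maxBoolIndep
  refine le_csInf ⟨#I, I, fun x => {x.1}, rfl, fun _ => isClosed_singleton, by simpa using hI⟩ ?_
  rintro _ ⟨ι, C, rfl, hC, hmax⟩
  obtain ⟨D, hDcard, hD⟩ := exists_dominating_of_maxBoolIndep hC hmax
  have hle : domNumber ≤ max #ι ℵ₀ := (domNumber_le_mk hD).trans hDcard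
  exact (le_max_iff.1 hle).resolve_right aleph0_lt_domNumber.not_ge
end

section
/- If ⟨T_n : n ∈ ω⟩ is a fusion sequence of splitting trees, i.e., T_{n+1} ≤_n T_n for all n, then T = ⋂_n T_n is a splitting tree, and moreover T ≤_n T_n for every n. -/
/-- A tree on `2`: a set of finite binary sequences closed under initial segments. -/
def IsTree (T : Set (List Bool)) : Prop := ∀ s ∈ T, ∀ t : List Bool, t <+: s → t ∈ T

/-- The restriction `T_s` of `T` to `s`: all nodes of `T` compatible with `s`. -/
def restrict (T : Set (List Bool)) (s : List Bool) : Set (List Bool) :=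
  {t ∈ T | t <+: s ∨ s <+: t}

/-- `S ⊆ 2^{<ω}` is fat: there is `m` such that for all `n ≥ m` there are
`s, t ∈ S` with `s(n) = 0` and `t(n) = 1`. -/
def Fat (S : Set (List Bool)) : Prop :=
  ∃ m : ℕ, ∀ n ≥ m, (∃ s ∈ S, s[n]? = some false) ∧ (∃ t ∈ S, t[n]? = some true)

/-- A perfect tree: a tree in which every node has two incomparable extensions. -/
def PerfectTree (T : Set (List Bool)) : Prop :=
  IsTree T ∧ ∀ t ∈ T, ∃ s₀ ∈ T, ∃ s₁ ∈ T,
    t <+: s₀ ∧ t <+: s₁ ∧ ¬ s₀ <+: s₁ ∧ ¬ s₁ <+: s₀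

/-- A splitting tree: a perfect tree `T` on `2` such that every restriction
`T_s` is fat. -/
def SplittingTree (T : Set (List Bool)) : Prop :=
  PerfectTree T ∧ ∀ s ∈ T, Fat (restrict T s)

/-- `m` witnesses fatness of `S`. -/
def FatWit (S : Set (List Bool)) (m : ℕ) : Prop :=
  ∀ n ≥ m, (∃ s ∈ S, s[n]? = some false) ∧ (∃ t ∈ S, t[n]? = some true)

/-- `m(S)`: the least witness of fatness of `S`. -/
noncomputable def mFat (S : Set (List Bool)) : ℕ := sInf {m : ℕ | FatWit S m}

/-- A splitting node of a tree on `2`: both immediate successors are in the tree. -/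
def IsSplitNode (T : Set (List Bool)) (s : List Bool) : Prop :=
  s ∈ T ∧ s ++ [false] ∈ T ∧ s ++ [true] ∈ T

/-- `split_{≤n}(T)`: splitting nodes of `T` with at most `n` proper splitting-node
initial segments. -/
def splitLE (n : ℕ) (T : Set (List Bool)) : Set (List Bool) :=
  {s | IsSplitNode T s ∧
    Nat.card {t : List Bool // t <+: s ∧ t ≠ s ∧ IsSplitNode T t} ≤ n}

/-- The fusion orderings `S ≤_n T` on splitting trees. -/
def SPle (n : ℕ) (S T : Set (List Bool)) : Prop :=
  S ⊆ T ∧ splitLE n S = splitLE n T ∧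
    ∀ s ∈ splitLE n S, mFat (restrict S s) = mFat (restrict T s)

/-!
A node lies in `split_{≤n}(T m)` for all `m ≥ n` as soon as it lies in `split_{≤n}(T n)`, and
the finitely many prefixes of a node split in `T m`, from some stage on, exactly when they split
in `⋂ T`; together these give `split_{≤n}(⋂ T) = split_{≤n}(T n)`. Above every node of `⋂ T`
the least splitting node of a late enough `T m` has the same splitting height in `T m` as in
`⋂ T`, hence is a splitting node of `⋂ T`, so `⋂ T` is perfect. Fatness passes to the limit by
pigeonhole: for each `m` some node of `(T m)_t` of length `n + 1` has the required `n`-th bit,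
there are finitely many such nodes, so one of them lies in every `T m`. The witnesses
`m((T m)_t)` for `t ∈ split_{≤n}(T n)` are constant from stage `n` on, and so equal
`m((⋂ T)_t)`.
-/

open Filter

lemma Antitone.eventually_iff_forall {α : Type*} [Preorder α] {p : α → Prop} (hp : Antitone p) :
    ∀ᶠ m in atTop, p m ↔ ∀ k, p k := by
  by_cases h : ∀ k, p k
  · exact Eventually.of_forall fun m => iff_of_true (h m) h
  · obtain ⟨k, hk⟩ := not_forall.mp h
    filter_upwards [eventually_ge_atTop k] with m hm
    exact iff_of_false (fun hpm => hk (hp hm hpm)) h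

lemma Antitone.nonempty_iInter_inter {ι α : Type*} [SemilatticeSup ι] [Nonempty ι]
    {T : ι → Set α} (hT : Antitone T) {S : Set α} (hS : S.Finite)
    (h : ∀ i, (T i ∩ S).Nonempty) : ((⋂ i, T i) ∩ S).Nonempty := by
  by_contra hempty
  have hout : ∀ x ∈ S, ∀ᶠ i in atTop, x ∉ T i := by
    intro x hx
    have hmem : Antitone fun i => x ∈ T i := fun _ _ hij hx => hT hij hx
    filter_upwards [hmem.eventually_iff_forall] with i hi
    exact fun hxi => hempty ⟨x, Set.mem_iInter.mpr (hi.mp hxi), hx⟩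
  obtain ⟨i, hi⟩ := (hS.eventually_all.mpr hout).exists
  obtain ⟨x, hxT, hxS⟩ := h i
  exact hi x hxS hxT

lemma List.finite_setOf_isPrefix {α : Type*} (s : List α) : {t | t <+: s}.Finite :=
  s.inits.finite_toSet.subset fun t ht => (List.mem_inits t s).mpr ht

lemma List.exists_fork_of_not_isPrefix :
    ∀ {a b : List Bool}, ¬ a <+: b → ¬ b <+: a → ∃ u x, u ++ [x] <+: a ∧ u ++ [!x] <+: b
  | [], _, hab, _ => absurd List.nil_prefix hab
  | _, [], _, hba => absurd List.nil_prefix hba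
  | x :: a, y :: b, hab, hba => by
    by_cases hxy : x = y
    · subst hxy
      obtain ⟨u, z, hua, hub⟩ :=
        exists_fork_of_not_isPrefix (a := a) (b := b) (by simpa using hab) (by simpa using hba)
      exact ⟨x :: u, z, by simpa using hua, by simpa using hub⟩
    · obtain rfl : y = !x := by cases x <;> cases y <;> simp_all
      exact ⟨[], x, by simp, by simp⟩

section Trees

variable {R S : Set (List Bool)} {s t : List Bool}

lemma IsTree.iInter {ι : Type*} {T : ι → Set (List Bool)} (hT : ∀ i, IsTree (T i)) :
    IsTree (⋂ i, T i) :=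
  fun s hs t hts => Set.mem_iInter.mpr fun i => hT i s (Set.mem_iInter.mp hs i) t hts

lemma IsTree.restrict (hR : IsTree R) (s : List Bool) : IsTree (restrict R s) := by
  rintro u ⟨hu, hus | hsu⟩ v hvu
  · exact ⟨hR u hu v hvu, Or.inl (hvu.trans hus)⟩
  · exact ⟨hR u hu v hvu, List.prefix_or_prefix_of_prefix hvu hsu⟩

lemma restrict_mono (h : S ⊆ R) : restrict S s ⊆ restrict R s :=
  fun _ hu => ⟨h hu.1, hu.2⟩

lemma restrict_anti_of_isPrefix (h : s <+: t) : restrict R t ⊆ restrict R s := by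
  rintro u ⟨hu, hut | htu⟩
  · exact ⟨hu, List.prefix_or_prefix_of_prefix hut h⟩
  · exact ⟨hu, Or.inr (h.trans htu)⟩

lemma restrict_iInter {ι : Type*} [Nonempty ι] (T : ι → Set (List Bool)) (s : List Bool) :
    restrict (⋂ i, T i) s = ⋂ i, restrict (T i) s := by
  ext t
  simp [restrict, ← and_or_left, forall_and]

end Trees

section Fatness

variable {R S : Set (List Bool)} {m : ℕ}

lemma FatWit.mono (hw : FatWit S m) (h : S ⊆ R) : FatWit R m := fun n hn =>
  have ⟨⟨u, hu, hu'⟩, ⟨v, hv, hv'⟩⟩ := hw n hn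
  ⟨⟨u, h hu, hu'⟩, ⟨v, h hv, hv'⟩⟩

lemma FatWit.mFat_le (hw : FatWit S m) : mFat S ≤ m := Nat.sInf_le hw

lemma Fat.fatWit_mFat (h : Fat S) : FatWit S (mFat S) := Nat.sInf_mem h

lemma mFat_le_mFat_of_subset (h : S ⊆ R) (hS : Fat S) : mFat R ≤ mFat S :=
  (hS.fatWit_mFat.mono h).mFat_le

lemma exists_mem_iInter_getElem?_eq {T : ℕ → Set (List Bool)} (hT : Antitone T)
    (htree : ∀ k, IsTree (T k)) {n : ℕ} {b : Bool} (h : ∀ k, ∃ u ∈ T k, u[n]? = some b) :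
    ∃ u ∈ ⋂ k, T k, u[n]? = some b := by
  have hS : {u : List Bool | u.length = n + 1 ∧ u[n]? = some b}.Finite :=
    (List.finite_length_eq Bool (n + 1)).subset fun u hu => hu.1
  obtain ⟨u, hu, -, hbit⟩ := hT.nonempty_iInter_inter hS fun k => by
    obtain ⟨u, hu, hbit⟩ := h k
    have hn : n < u.length := (List.getElem?_eq_some_iff.mp hbit).1
    exact ⟨u.take (n + 1), htree k u hu _ (List.take_prefix _ _), by simp; omega,
      by simp [hbit]⟩
  exact ⟨u, hu, hbit⟩

lemma fatWit_iInter {T : ℕ → Set (List Bool)} (hT : Antitone T) (htree : ∀ k, IsTree (T k))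
    (hw : ∀ k, FatWit (T k) m) : FatWit (⋂ k, T k) m := fun n hn =>
  ⟨exists_mem_iInter_getElem?_eq hT htree fun k => (hw k n hn).1,
    exists_mem_iInter_getElem?_eq hT htree fun k => (hw k n hn).2⟩

end Fatness

def splitPreds (R : Set (List Bool)) (s : List Bool) : Set (List Bool) :=
  {t | t <+: s ∧ t ≠ s ∧ IsSplitNode R t}

section SplitNodes

variable {R S : Set (List Bool)} {s t : List Bool} {n k : ℕ}

lemma IsSplitNode.mono (hs : IsSplitNode S s) (h : S ⊆ R) : IsSplitNode R s :=
  ⟨h hs.1, h hs.2.1, h hs.2.2⟩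

lemma isSplitNode_iInter {ι : Type*} {T : ι → Set (List Bool)} :
    IsSplitNode (⋂ i, T i) s ↔ ∀ i, IsSplitNode (T i) s := by
  simp only [IsSplitNode, Set.mem_iInter, forall_and]

lemma splitPreds_finite (R : Set (List Bool)) (s : List Bool) : (splitPreds R s).Finite :=
  (List.finite_setOf_isPrefix s).subset fun _ ht => ht.1

lemma splitPreds_mono (h : S ⊆ R) : splitPreds S s ⊆ splitPreds R s :=
  fun _ ⟨hts, hne, ht⟩ => ⟨hts, hne, ht.mono h⟩

lemma splitPreds_ssubset (ht : t ∈ splitPreds R s) : splitPreds R t ⊂ splitPreds R s := by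
  have hsub : splitPreds R t ⊆ splitPreds R s := by
    rintro u ⟨hut, -, hu⟩
    refine ⟨hut.trans ht.1, ?_, hu⟩
    rintro rfl
    exact ht.2.1 (ht.1.eq_of_length_le hut.length_le)
  exact (Set.ssubset_iff_of_subset hsub).mpr ⟨t, ht, fun h => h.2.1 rfl⟩

lemma mem_splitLE : s ∈ splitLE n R ↔ IsSplitNode R s ∧ (splitPreds R s).ncard ≤ n := by
  rw [splitLE, ← Nat.card_coe_set_eq]
  rfl

lemma mem_splitLE_ncard_splitPreds (hs : IsSplitNode R s) :
    s ∈ splitLE (splitPreds R s).ncard R :=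
  mem_splitLE.mpr ⟨hs, le_rfl⟩

lemma splitLE_mono (h : n ≤ k) : splitLE n R ⊆ splitLE k R := fun _ hs =>
  have ⟨hsplit, hcard⟩ := mem_splitLE.mp hs
  mem_splitLE.mpr ⟨hsplit, hcard.trans h⟩

lemma splitPreds_subset_splitLE (hs : s ∈ splitLE k R) : splitPreds R s ⊆ splitLE k R :=
  fun _ ht => mem_splitLE.mpr ⟨ht.2.2, ((Set.ncard_lt_ncard (splitPreds_ssubset ht)
    (splitPreds_finite R s)).trans_le (mem_splitLE.mp hs).2).le⟩

lemma splitPreds_subset_of_splitLE_eq (h : splitLE k S = splitLE k R) (hs : s ∈ splitLE k S) :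
    splitPreds S s ⊆ splitPreds R s := fun t ht =>
  have htR : t ∈ splitLE k R := h ▸ splitPreds_subset_splitLE hs ht
  ⟨ht.1, ht.2.1, (mem_splitLE.mp htR).1⟩

lemma splitLE_subset_of_le (hnk : n ≤ k) (h : splitLE k S = splitLE k R) :
    splitLE n S ⊆ splitLE n R := fun s hs =>
  have hsk : s ∈ splitLE k S := splitLE_mono hnk hs
  have hpreds : splitPreds S s = splitPreds R s :=
    (splitPreds_subset_of_splitLE_eq h hsk).antisymm
      (splitPreds_subset_of_splitLE_eq h.symm (h ▸ hsk))
  mem_splitLE.mpr ⟨(mem_splitLE.mp (h ▸ hsk)).1, hpreds ▸ (mem_splitLE.mp hs).2⟩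

lemma Antitone.eventually_splitPreds_eq {T : ℕ → Set (List Bool)} (hT : Antitone T)
    (s : List Bool) : ∀ᶠ m in atTop, splitPreds (T m) s = splitPreds (⋂ k, T k) s := by
  have hsplit (u : List Bool) : Antitone fun m => IsSplitNode (T m) u :=
    fun _ _ h hu => hu.mono (hT h)
  filter_upwards [(List.finite_setOf_isPrefix s).eventually_all.mpr
    fun u _ => (hsplit u).eventually_iff_forall] with m hm
  ext u
  simp only [splitPreds, Set.mem_ofPred_eq, isSplitNode_iInter]
  exact ⟨fun ⟨hus, hne, hu⟩ => ⟨hus, hne, (hm u hus).mp hu⟩,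
    fun ⟨hus, hne, hu⟩ => ⟨hus, hne, (hm u hus).mpr hu⟩⟩

end SplitNodes

section Perfect

variable {R : Set (List Bool)} {s : List Bool}

lemma PerfectTree.exists_isSplitNode (hR : PerfectTree R) (hs : s ∈ R) :
    ∃ t, s <+: t ∧ IsSplitNode R t := by
  obtain ⟨s₀, h₀, s₁, h₁, hs₀, hs₁, h01, h10⟩ := hR.2 s hs
  obtain ⟨u, x, hu₀, hu₁⟩ := List.exists_fork_of_not_isPrefix h01 h10
  have hx := hR.1 s₀ h₀ _ hu₀
  have hnx := hR.1 s₁ h₁ _ hu₁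
  have hsplit : IsSplitNode R u := by
    refine ⟨hR.1 _ hx u (List.prefix_append u [x]), ?_⟩
    cases x
    · exact ⟨hx, hnx⟩
    · exact ⟨hnx, hx⟩
  refine ⟨u, ?_, hsplit⟩
  by_contra hsu
  -- otherwise `s` extends both `u ++ [x]` and `u ++ [!x]`
  have hlen : (u ++ [x]).length ≤ s.length := by
    have := mt (List.prefix_of_prefix_length_le hs₀ ((List.prefix_append u [x]).trans hu₀)) hsu
    simp only [List.length_append, List.length_singleton]
    omega
  have hxs : u ++ [x] <+: s := List.prefix_of_prefix_length_le hu₀ hs₀ hlen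
  have hnxs : u ++ [!x] <+: s := List.prefix_of_prefix_length_le hu₁ hs₁ (by simpa using hlen)
  have := List.prefix_of_prefix_length_le hxs hnxs (by simp)
  simp at this

lemma PerfectTree.exists_isSplitNode_splitPreds_eq (hR : PerfectTree R) (hs : s ∈ R) :
    ∃ t, s <+: t ∧ IsSplitNode R t ∧ splitPreds R t = splitPreds R s := by
  classical
  have hex : ∃ l, ∃ t, s <+: t ∧ IsSplitNode R t ∧ t.length = l :=
    have ⟨t, hst, ht⟩ := hR.exists_isSplitNode hs
    ⟨_, t, hst, ht, rfl⟩
  obtain ⟨t, hst, ht, htl⟩ := Nat.find_spec hex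
  have hmin : ∀ u, s <+: u → IsSplitNode R u → t.length ≤ u.length := fun u hsu hu =>
    htl ▸ Nat.find_min' hex ⟨u, hsu, hu, rfl⟩
  refine ⟨t, hst, ht, Set.Subset.antisymm ?_ fun u ⟨hus, hne, hu⟩ => ⟨hus.trans hst, ?_, hu⟩⟩
  · rintro u ⟨hut, hne, hu⟩
    have hlt : u.length < t.length :=
      lt_of_le_of_ne hut.length_le fun h => hne (hut.eq_of_length_le h.ge)
    rcases List.prefix_or_prefix_of_prefix hut hst with hus | hsu
    · refine ⟨hus, ?_, hu⟩
      rintro rfl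
      exact absurd (hmin u (List.prefix_refl u) hu) (by omega)
    · exact absurd (hmin u hsu hu) (by omega)
  · rintro rfl
    exact hne (hus.eq_of_length_le hst.length_le)

end Perfect

lemma SPle.refl (n : ℕ) (S : Set (List Bool)) : SPle n S S :=
  ⟨subset_rfl, rfl, fun _ _ => rfl⟩

lemma SPle.trans {n : ℕ} {S R U : Set (List Bool)} (h₁ : SPle n S R) (h₂ : SPle n R U) :
    SPle n S U :=
  ⟨h₁.1.trans h₂.1, h₁.2.1.trans h₂.2.1,
    fun s hs => (h₁.2.2 s hs).trans (h₂.2.2 s (h₁.2.1 ▸ hs))⟩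

lemma SPle.of_le {n k : ℕ} {S R : Set (List Bool)} (hnk : n ≤ k) (h : SPle k S R) :
    SPle n S R :=
  ⟨h.1, (splitLE_subset_of_le hnk h.2.1).antisymm (splitLE_subset_of_le hnk h.2.1.symm),
    fun s hs => h.2.2 s (splitLE_mono hnk hs)⟩

def IsFusionSequence (T : ℕ → Set (List Bool)) : Prop :=
  ∀ n, SPle n (T (n + 1)) (T n)

namespace IsFusionSequence

variable {T : ℕ → Set (List Bool)} {n m : ℕ} {s t : List Bool}

lemma antitone (hT : IsFusionSequence T) : Antitone T :=
  antitone_nat_of_succ_le fun n => (hT n).1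

lemma sPle (hT : IsFusionSequence T) (h : n ≤ m) : SPle n (T m) (T n) := by
  induction m, h using Nat.le_induction with
  | base => exact SPle.refl n (T n)
  | succ m hnm ih => exact ((hT m).of_le hnm).trans ih

lemma mem_splitLE_of_le (hT : IsFusionSequence T) (h : n ≤ m) (ht : t ∈ splitLE n (T n)) :
    t ∈ splitLE n (T m) :=
  (hT.sPle h).2.1 ▸ ht

lemma splitLE_iInter (hT : IsFusionSequence T) (n : ℕ) :
    splitLE n (⋂ k, T k) = splitLE n (T n) := by
  ext t
  constructor
  · intro ht
    obtain ⟨htW, hcard⟩ := mem_splitLE.mp ht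
    obtain ⟨m, hnm, hm⟩ :=
      ((eventually_ge_atTop n).and (hT.antitone.eventually_splitPreds_eq t)).exists
    rw [← (hT.sPle hnm).2.1]
    exact mem_splitLE.mpr ⟨htW.mono (Set.iInter_subset T m), hm ▸ hcard⟩
  · intro ht
    have hsplit (m : ℕ) : IsSplitNode (T m) t :=
      (mem_splitLE.mp (hT.mem_splitLE_of_le (le_max_left n m) ht)).1.mono
        (hT.antitone (le_max_right n m))
    refine mem_splitLE.mpr ⟨isSplitNode_iInter.mpr hsplit, ?_⟩
    exact (Set.ncard_le_ncard (splitPreds_mono (Set.iInter_subset T n))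
      (splitPreds_finite _ _)).trans (mem_splitLE.mp ht).2

lemma exists_isSplitNode_iInter (hT : IsFusionSequence T) (hperf : ∀ m, PerfectTree (T m))
    (hs : s ∈ ⋂ k, T k) : ∃ t, s <+: t ∧ IsSplitNode (⋂ k, T k) t := by
  set k := (splitPreds (⋂ k, T k) s).ncard
  obtain ⟨m, hkm, hm⟩ :=
    ((eventually_ge_atTop k).and (hT.antitone.eventually_splitPreds_eq s)).exists
  obtain ⟨t, hst, ht, hpreds⟩ :=
    (hperf m).exists_isSplitNode_splitPreds_eq (Set.mem_iInter.mp hs m)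
  have htm : t ∈ splitLE k (T m) := mem_splitLE.mpr ⟨ht, by rw [hpreds, hm]⟩
  rw [(hT.sPle hkm).2.1, ← hT.splitLE_iInter] at htm
  exact ⟨t, hst, (mem_splitLE.mp htm).1⟩

lemma fatWit_restrict_iInter (hT : IsFusionSequence T) (hsplit : ∀ m, SplittingTree (T m))
    (ht : t ∈ splitLE n (⋂ k, T k)) :
    FatWit (restrict (⋂ k, T k) t) (mFat (restrict (T n) t)) := by
  rw [hT.splitLE_iInter] at ht
  have hwit (m : ℕ) : FatWit (restrict (T m) t) (mFat (restrict (T n) t)) := by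
    have htm := hT.mem_splitLE_of_le (le_max_left n m) ht
    have hfat := ((hsplit _).2 t (mem_splitLE.mp htm).1.1).fatWit_mFat
    rw [(hT.sPle (le_max_left n m)).2.2 t htm] at hfat
    exact hfat.mono (restrict_mono (hT.antitone (le_max_right n m)))
  rw [restrict_iInter]
  exact fatWit_iInter (fun _ _ h => restrict_mono (hT.antitone h))
    (fun m => (hsplit m).1.1.restrict t) hwit

lemma mFat_restrict_iInter (hT : IsFusionSequence T) (hsplit : ∀ m, SplittingTree (T m))
    (ht : t ∈ splitLE n (⋂ k, T k)) :
    mFat (restrict (⋂ k, T k) t) = mFat (restrict (T n) t) :=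
  have hw := hT.fatWit_restrict_iInter hsplit ht
  hw.mFat_le.antisymm (mFat_le_mFat_of_subset (restrict_mono (Set.iInter_subset T n)) ⟨_, hw⟩)

lemma splittingTree_iInter (hT : IsFusionSequence T) (hsplit : ∀ m, SplittingTree (T m)) :
    SplittingTree (⋂ k, T k) := by
  refine ⟨⟨IsTree.iInter fun m => (hsplit m).1.1, fun s hs => ?_⟩, fun s hs => ?_⟩
  · obtain ⟨t, hst, ht⟩ := hT.exists_isSplitNode_iInter (fun m => (hsplit m).1) hs
    exact ⟨t ++ [false], ht.2.1, t ++ [true], ht.2.2, hst.trans (List.prefix_append _ _),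
      hst.trans (List.prefix_append _ _), by simp, by simp⟩
  · obtain ⟨t, hst, ht⟩ := hT.exists_isSplitNode_iInter (fun m => (hsplit m).1) hs
    exact ⟨_, (hT.fatWit_restrict_iInter hsplit (mem_splitLE_ncard_splitPreds ht)).mono
      (restrict_anti_of_isPrefix hst)⟩

lemma sPle_iInter (hT : IsFusionSequence T) (hsplit : ∀ m, SplittingTree (T m)) (n : ℕ) :
    SPle n (⋂ k, T k) (T n) :=
  ⟨Set.iInter_subset T n, hT.splitLE_iInter n, fun _ ht => hT.mFat_restrict_iInter hsplit ht⟩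

end IsFusionSequence

/-- If `⟨T n⟩` is a fusion sequence of splitting trees, i.e. `T (n+1) ≤_n T n`
for all `n`, then `⋂ n, T n` is a splitting tree and `⋂ n, T n ≤_n T n` for
every `n`. -/
theorem stmt7 (T : ℕ → Set (List Bool)) (hT : ∀ n, SplittingTree (T n))
    (hfus : ∀ n, SPle n (T (n + 1)) (T n)) :
    SplittingTree (⋂ k, T k) ∧ ∀ n, SPle n (⋂ k, T k) (T n) :=
  have hfus : IsFusionSequence T := hfus
  ⟨hfus.splittingTree_iInter hT, hfus.sPle_iInter hT⟩
end

section
/- For every splitting tree S there is an antichain A ⊆ S (as a subset of 2^{<ω}, i.e., pairwise incomparable nodes) such that for every k ∈ ω and j ∈ 2, if some s ∈ S satisfies s(k) = j then some t ∈ A satisfies t(k) = j. -/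
namespace List

variable {α : Type*} {l₁ l₂ l₃ : List α} {i : ℕ} {a : α}

theorem IsPrefix.getElem?_eq_some (h : l₁ <+: l₂) (hi : l₁[i]? = some a) :
    l₂[i]? = some a := by
  obtain ⟨l, rfl⟩ := h
  rwa [getElem?_append_left (getElem?_eq_some_iff.1 hi).1]

theorem getElem?_eq_some_of_symmGen (h : Relation.SymmGen (· <+: ·) l₁ l₂)
    (hi : l₁[i]? = some a) (hlt : i < l₂.length) : l₂[i]? = some a := by
  rcases h with h | h
  · exact h.getElem?_eq_some hi
  · rw [getElem?_eq_getElem hlt]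
    exact (prefix_iff_getElem?.1 h i hlt).symm.trans hi

theorem incompRel_of_isPrefix_left (h : IncompRel (· <+: ·) l₁ l₃) (h₁₂ : l₁ <+: l₂) :
    IncompRel (· <+: ·) l₂ l₃ :=
  ⟨fun h₂₃ => h.1 (h₁₂.trans h₂₃),
    fun h₃₂ => (prefix_or_prefix_of_prefix h₁₂ h₃₂).elim h.1 h.2⟩

end List

open List

variable {S A : Set (List Bool)}

theorem PerfectTree.exists_extension_le_length (hS : PerfectTree S) {s : List Bool} (hs : s ∈ S)
    (n : ℕ) : ∃ t ∈ S, s <+: t ∧ n ≤ t.length := by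
  induction n with
  | zero => exact ⟨s, hs, prefix_rfl, Nat.zero_le _⟩
  | succ n ih =>
    obtain ⟨t, ht, hst, hn⟩ := ih
    obtain ⟨t₀, ht₀, t₁, -, htt₀, htt₁, ht₀t₁, -⟩ := hS.2 t ht
    have hlen : t.length ≠ t₀.length := fun h => ht₀t₁ (htt₀.eq_of_length h ▸ htt₁)
    exact ⟨t₀, ht₀, hst.trans htt₀, by have := htt₀.length_le; omega⟩

theorem Fat.exists_extension_of_restrict {b : List Bool} (hb : b ∈ S) (h : Fat (restrict S b)) :
    ∃ m : ℕ, ∀ k ≥ m, ∀ j : Bool, ∃ v ∈ S, b <+: v ∧ v[k]? = some j := by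
  obtain ⟨m, hm⟩ := h
  refine ⟨m, fun k hk j => ?_⟩
  obtain ⟨u, ⟨hu, hub | hbu⟩, huk⟩ : ∃ u ∈ restrict S b, u[k]? = some j := by
    cases j
    exacts [(hm k hk).1, (hm k hk).2]
  · exact ⟨b, hb, prefix_rfl, hub.getElem?_eq_some huk⟩
  · exact ⟨u, hu, hbu, huk⟩

def Realizes (A : Set (List Bool)) (k : ℕ) (j : Bool) : Prop :=
  ∃ t ∈ A, t[k]? = some j

theorem Realizes.mono {B : Set (List Bool)} {k : ℕ} {j : Bool} (h : Realizes A k j)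
    (hAB : A ⊆ B) : Realizes B k j :=
  let ⟨t, ht, htk⟩ := h
  ⟨t, hAB ht, htk⟩

def freeNodes (S A : Set (List Bool)) : Set (List Bool) :=
  {u ∈ S | ∀ a ∈ A, IncompRel (· <+: ·) u a}

structure IsExtendableAntichain (S A : Set (List Bool)) : Prop where
  subset : A ⊆ S
  isAntichain : IsAntichain (· <+: ·) A
  realizes : ∀ k j, Realizes S k j → Realizes A k j ∨ Realizes (freeNodes S A) k j

namespace IsExtendableAntichain

variable {k : ℕ} {j : Bool}

theorem empty : IsExtendableAntichain S ∅ :=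
  ⟨Set.empty_subset S, Set.pairwise_empty _,
    fun _ _ h => Or.inr (h.mono fun _ hs => ⟨hs, fun _ => False.elim⟩)⟩

theorem exists_insert (hS : SplittingTree S) (hA : IsExtendableAntichain S A)
    (hkj : Realizes (freeNodes S A) k j) :
    ∃ t, IsExtendableAntichain S (insert t A) ∧ t[k]? = some j := by
  obtain ⟨u, ⟨huS, huA⟩, huk⟩ := hkj
  obtain ⟨a, ha, b, hb, hua, hub, hab, hba⟩ := hS.1.2 u huS
  obtain ⟨m, hm⟩ := Fat.exists_extension_of_restrict hb (hS.2 b hb)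
  obtain ⟨t, ht, hat, hmt⟩ := hS.1.exists_extension_le_length ha m
  have htA : ∀ c ∈ A, IncompRel (· <+: ·) t c :=
    fun c hc => incompRel_of_isPrefix_left (huA c hc) (hua.trans hat)
  have hbt : IncompRel (· <+: ·) b t := (incompRel_of_isPrefix_left ⟨hab, hba⟩ hat).symm
  refine ⟨t, ⟨Set.insert_subset ht hA.subset,
    hA.isAntichain.insert (fun c hc _ => (htA c hc).2) (fun c hc _ => (htA c hc).1),
    fun k' j' hk'j' => ?_⟩, (hua.trans hat).getElem?_eq_some huk⟩
  rcases hA.realizes k' j' hk'j' with hAk | ⟨v, ⟨hvS, hvA⟩, hvk⟩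
  · exact Or.inl (hAk.mono (Set.subset_insert t A))
  by_cases hvt : IncompRel (· <+: ·) v t
  · exact Or.inr ⟨v, ⟨hvS, Set.forall_mem_insert.2 ⟨hvt, hvA⟩⟩, hvk⟩
  by_cases hk't : k' < t.length
  · exact Or.inl ⟨t, Set.mem_insert t A,
      getElem?_eq_some_of_symmGen (not_incompRel_iff_symmGen.1 hvt) hvk hk't⟩
  obtain ⟨w, hwS, hbw, hwk⟩ := hm k' (by omega) j'
  exact Or.inr ⟨w, ⟨hwS, Set.forall_mem_insert.2 ⟨incompRel_of_isPrefix_left hbt hbw,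
    fun c hc => incompRel_of_isPrefix_left (huA c hc) (hub.trans hbw)⟩⟩, hwk⟩

theorem exists_superset_realizes (hS : SplittingTree S) (hA : IsExtendableAntichain S A)
    (k : ℕ) (j : Bool) :
    ∃ A' ⊇ A, IsExtendableAntichain S A' ∧ (Realizes S k j → Realizes A' k j) := by
  by_cases hSk : Realizes S k j
  · rcases hA.realizes k j hSk with hAk | hfree
    · exact ⟨A, subset_rfl, hA, fun _ => hAk⟩
    · obtain ⟨t, ht, htk⟩ := hA.exists_insert hS hfree
      exact ⟨insert t A, Set.subset_insert t A, ht, fun _ => ⟨t, Set.mem_insert t A, htk⟩⟩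
  · exact ⟨A, subset_rfl, hA, fun h => absurd h hSk⟩

theorem exists_superset_realizes_forall (hS : SplittingTree S) (hA : IsExtendableAntichain S A)
    (k : ℕ) :
    ∃ A' ⊇ A, IsExtendableAntichain S A' ∧ ∀ j, Realizes S k j → Realizes A' k j := by
  obtain ⟨A₁, hAA₁, hA₁, h₁⟩ := hA.exists_superset_realizes hS k false
  obtain ⟨A₂, hA₁A₂, hA₂, h₂⟩ := hA₁.exists_superset_realizes hS k true
  refine ⟨A₂, hAA₁.trans hA₁A₂, hA₂, fun j hj => ?_⟩
  cases j
  · exact (h₁ hj).mono hA₁A₂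
  · exact h₂ hj

end IsExtendableAntichain

theorem SplittingTree.exists_antichain_realizes (hS : SplittingTree S) :
    ∃ A ⊆ S, IsAntichain (· <+: ·) A ∧ ∀ k j, Realizes S k j → Realizes A k j := by
  choose! next hsub hnext hreal using fun (A : Set (List Bool)) (hA : IsExtendableAntichain S A) =>
    hA.exists_superset_realizes_forall hS
  let F : ℕ → Set (List Bool) := fun n => Nat.rec ∅ (fun k A => next A k) n
  have hF : ∀ n, IsExtendableAntichain S (F n) := by
    intro n
    induction n with
    | zero => exact IsExtendableAntichain.empty
    | succ n ih => exact hnext _ ih n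
  have hmono : Monotone F := monotone_nat_of_le_succ fun n => hsub _ (hF n) n
  refine ⟨⋃ n, F n, Set.iUnion_subset fun n => (hF n).subset,
    (Set.pairwise_iUnion hmono.directed_le).2 fun n => (hF n).isAntichain,
    fun k j hkj => (hreal _ (hF k) k j hkj).mono (Set.subset_iUnion F (k + 1))⟩

/-- For every splitting tree `S` there is an antichain `A ⊆ S` (pairwise
incomparable nodes of `2^{<ω}`) such that for every `k` and `j ∈ 2`, if some
`s ∈ S` has `s(k) = j`, then some `t ∈ A` has `t(k) = j`. -/
theorem stmt8 (S : Set (List Bool)) (hS : SplittingTree S) :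
    ∃ A ⊆ S, (∀ s ∈ A, ∀ t ∈ A, s ≠ t → ¬ s <+: t ∧ ¬ t <+: s) ∧
      ∀ (k : ℕ) (j : Bool), (∃ s ∈ S, s[k]? = some j) →
        ∃ t ∈ A, t[k]? = some j := by
  obtain ⟨A, hAS, hA, hreal⟩ := hS.exists_antichain_realizes
  exact ⟨A, hAS, fun s hs t ht hst => ⟨hA hs ht hst, hA ht hs hst.symm⟩, hreal⟩
end

section
/- Splitting forcing SP is weighted: for every splitting tree T there is a weight ρ on T (a map ρ : T × T → [T]^{<ω} with ρ(s,t) ⊆ T_s ∖ T_t) such that every tree S with S ≤_ρ T is again a splitting tree. -/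
/-- A weight on a perfect tree `T`: a map `ρ : T × T → [T]^{<ω}` with
`ρ(s,t) ⊆ T_s ∖ T_t`. -/
def IsWeight (T : Set (List Bool)) (ρ : List Bool → List Bool → Finset (List Bool)) : Prop :=
  ∀ s ∈ T, ∀ t ∈ T, ↑(ρ s t) ⊆ restrict T s \ restrict T t

/-- `S ≤_ρ T`: `S ⊆ T` and there is a dense set of `s₀ ∈ S` admitting an
injective sequence `(s_n)` in `S_{s₀}` with `s₀` as first element and
`ρ(s_n, s_{n+1}) ⊆ S` for all `n`. -/
def LeRho (ρ : List Bool → List Bool → Finset (List Bool)) (T S : Set (List Bool)) : Prop :=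
  S ⊆ T ∧ ∀ s ∈ S, ∃ s₀ ∈ S, s <+: s₀ ∧ ∃ f : ℕ → List Bool,
    Function.Injective f ∧ f 0 = s₀ ∧ (∀ n, f n ∈ restrict S s₀) ∧
    ∀ n, ↑(ρ (f n) (f (n + 1))) ⊆ S

/-!
Let `σ(s)` be the least height at which `T` has two incomparable nodes above `s`, and let
`E(s) ≥ σ(s)` be a level above which every `T_w` with `|w| ≤ σ(s)` takes both values. Take for
`ρ(s, t)` all nodes of `T` above `s`, incomparable with `t`, of height at most `E(t) + 1`.

Let `(s_k)` witness `S ≤_ρ T` at `s₀`. Call a step covered if some node of `T` above `s_k` of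
height at most `σ(s_k)` is incomparable with `s_{k+1}`. At an uncovered step `s_{k+1}` lies below
both halves of the first splitting above `s_k`, so `σ` and hence `E` do not increase. Injectivity
makes `E(s_k) ≥ |s_k|` unbounded, so every large level `n` satisfies `E(s_k) ≤ n < E(s_{k+1})` at
some covered step. The node `b` covering it has `T_b` fat beyond `E(s_k)`, and truncating the
nodes of `T_b` to height `n + 1` puts nodes with both values at `n` into `ρ(s_k, s_{k+1}) ⊆ S`.
-/

namespace SplittingForcing

open Filter Function

section Lists

variable {α : Type*}

def Incomparable (x y : List α) : Prop :=
  ¬ x <+: y ∧ ¬ y <+: x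

theorem Incomparable.symm {x y : List α} (h : Incomparable x y) : Incomparable y x :=
  ⟨h.2, h.1⟩

theorem Incomparable.of_prefix {b t u : List α} (h : Incomparable b t) (hbu : b <+: u) :
    Incomparable u t :=
  ⟨fun hut ↦ h.1 (hbu.trans hut),
   fun htu ↦ (List.prefix_or_prefix_of_prefix hbu htu).elim h.1 h.2⟩

theorem _root_.List.IsPrefix.getElem?_eq_some_s9 {x y : List α} (h : x <+: y) {n : ℕ} {a : α}
    (hx : x[n]? = some a) : y[n]? = some a := by
  obtain ⟨hn, rfl⟩ := List.getElem?_eq_some_iff.1 hx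
  exact List.prefix_iff_getElem?.1 h n hn

theorem incomparable_of_getElem?_eq {x y : List α} {n : ℕ} {a b : α}
    (hx : x[n]? = some a) (hy : y[n]? = some b) (hab : a ≠ b) : Incomparable x y :=
  ⟨fun h ↦ hab (Option.some.inj ((h.getElem?_eq_some_s9 hx).symm.trans hy)),
   fun h ↦ hab (Option.some.inj (hx.symm.trans (h.getElem?_eq_some_s9 hy)))⟩

theorem prefix_of_not_incomparable {b₀ b₁ t : List α} (h : Incomparable b₀ b₁)
    (h₀ : ¬ Incomparable b₀ t) (h₁ : ¬ Incomparable b₁ t) : t <+: b₀ := by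
  simp only [Incomparable, not_and_or, not_not] at h₀ h₁
  rcases h₀ with hb₀t | htb₀
  · rcases h₁ with hb₁t | htb₁
    · exact ((List.prefix_or_prefix_of_prefix hb₀t hb₁t).elim h.1 h.2).elim
    · exact (h.1 (hb₀t.trans htb₁)).elim
  · exact htb₀

theorem prefix_of_compatible_of_length_le {b u : List α} (hbu : u <+: b ∨ b <+: u)
    (hl : b.length ≤ u.length) : b <+: u :=
  hbu.elim (fun hub ↦ hub.eq_of_length_le hl ▸ List.prefix_refl u) id

theorem eventually_lt_length [Finite α] {f : ℕ → List α} (hf : Injective f) (C : ℕ) :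
    ∀ᶠ k in atTop, C < (f k).length := by
  rw [← Nat.cofinite_eq_atTop]
  filter_upwards [hf.tendsto_cofinite.eventually
    (List.finite_length_le α C).eventually_cofinite_notMem] with k hk
  simpa using hk

end Lists

theorem _root_.Nat.exists_le_lt_succ {e : ℕ → ℕ} {K n : ℕ} (hK : e K ≤ n) (h : ∃ k ≥ K, n < e k) :
    ∃ k ≥ K, e k ≤ n ∧ n < e (k + 1) := by
  by_contra! H
  obtain ⟨k, hk, hnk⟩ := h
  have : ∀ k ≥ K, e k ≤ n := fun k hk ↦ Nat.le_induction hK (fun j hj ↦ H j hj) k hk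
  exact (this k hk).not_gt hnk

def SplitsAt (A : Set (List Bool)) (n : ℕ) : Prop :=
  ∀ c : Bool, ∃ u ∈ A, u[n]? = some c

theorem fat_iff_eventually_splitsAt {A : Set (List Bool)} :
    Fat A ↔ ∀ᶠ n in atTop, SplitsAt A n := by
  simp only [Fat, SplitsAt, Bool.forall_bool, eventually_atTop]

theorem SplitsAt.mono {A B : Set (List Bool)} {n : ℕ} (h : SplitsAt A n) (hAB : A ⊆ B) :
    SplitsAt B n := fun c ↦ (h c).imp fun _ hu ↦ ⟨hAB hu.1, hu.2⟩

theorem SplitsAt.exists_incomparable {A : Set (List Bool)} {n : ℕ} (h : SplitsAt A n) :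
    ∃ u₀ ∈ A, ∃ u₁ ∈ A, Incomparable u₀ u₁ := by
  obtain ⟨u₀, hu₀, h₀⟩ := h false
  obtain ⟨u₁, hu₁, h₁⟩ := h true
  exact ⟨u₀, hu₀, u₁, hu₁, incomparable_of_getElem?_eq h₀ h₁ Bool.false_ne_true⟩

variable {T : Set (List Bool)}

noncomputable def fatLevel (T : Set (List Bool)) (L : ℕ) : ℕ :=
  sInf {M | L ≤ M ∧ ∀ n ≥ M, ∀ w ∈ T, w.length ≤ L → SplitsAt (restrict T w) n}

theorem fatLevel_spec (hT : SplittingTree T) (L : ℕ) :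
    L ≤ fatLevel T L ∧
      ∀ n ≥ fatLevel T L, ∀ w ∈ T, w.length ≤ L → SplitsAt (restrict T w) n := by
  have : ∀ᶠ n in atTop, ∀ w ∈ {w : List Bool | w.length ≤ L}, w ∈ T →
      SplitsAt (restrict T w) n :=
    (eventually_all_finite (List.finite_length_le Bool L)).2 fun w _ ↦
      eventually_imp_distrib_left.2 fun hw ↦ fat_iff_eventually_splitsAt.1 (hT.2 w hw)
  obtain ⟨M, hM⟩ := eventually_atTop.1 this
  have hne : ∃ M, L ≤ M ∧ ∀ n ≥ M, ∀ w ∈ T, w.length ≤ L → SplitsAt (restrict T w) n :=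
    ⟨max M L, le_max_right M L, fun n hn w hw hwL ↦ hM n (le_of_max_le_left hn) w hwL hw⟩
  exact Nat.sInf_mem hne

theorem fatLevel_mono (hT : SplittingTree T) : Monotone (fatLevel T) := by
  intro L L' hL
  obtain ⟨hL'M, hM⟩ := fatLevel_spec hT L'
  exact Nat.sInf_le ⟨hL.trans hL'M, fun n hn w hw hwL ↦ hM n hn w hw (hwL.trans hL)⟩

noncomputable def splitHeight (T : Set (List Bool)) (s : List Bool) : ℕ :=
  sInf {L | ∃ b₀ ∈ T, ∃ b₁ ∈ T, s <+: b₀ ∧ s <+: b₁ ∧ Incomparable b₀ b₁ ∧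
    b₀.length ≤ L ∧ b₁.length ≤ L}

theorem splitHeight_spec (hT : PerfectTree T) {s : List Bool} (hs : s ∈ T) :
    ∃ b₀ ∈ T, ∃ b₁ ∈ T, s <+: b₀ ∧ s <+: b₁ ∧ Incomparable b₀ b₁ ∧
      b₀.length ≤ splitHeight T s ∧ b₁.length ≤ splitHeight T s := by
  obtain ⟨b₀, hb₀, b₁, hb₁, hsb₀, hsb₁, h₀₁, h₁₀⟩ := hT.2 s hs
  have hne : ∃ L, ∃ b₀ ∈ T, ∃ b₁ ∈ T, s <+: b₀ ∧ s <+: b₁ ∧ Incomparable b₀ b₁ ∧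
      b₀.length ≤ L ∧ b₁.length ≤ L :=
    ⟨_, b₀, hb₀, b₁, hb₁, hsb₀, hsb₁, ⟨h₀₁, h₁₀⟩, le_max_left _ _, le_max_right _ _⟩
  exact Nat.sInf_mem hne

def Covered (T : Set (List Bool)) (s t : List Bool) : Prop :=
  ∃ b ∈ T, s <+: b ∧ b.length ≤ splitHeight T s ∧ Incomparable b t

theorem splitHeight_le_of_not_covered (hT : PerfectTree T) {s t : List Bool} (hs : s ∈ T)
    (h : ¬ Covered T s t) : splitHeight T t ≤ splitHeight T s := by
  obtain ⟨b₀, hb₀, b₁, hb₁, hsb₀, hsb₁, hb, hb₀L, hb₁L⟩ := splitHeight_spec hT hs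
  have h₀ : ¬ Incomparable b₀ t := fun h' ↦ h ⟨b₀, hb₀, hsb₀, hb₀L, h'⟩
  have h₁ : ¬ Incomparable b₁ t := fun h' ↦ h ⟨b₁, hb₁, hsb₁, hb₁L, h'⟩
  exact Nat.sInf_le ⟨b₀, hb₀, b₁, hb₁, prefix_of_not_incomparable hb h₀ h₁,
    prefix_of_not_incomparable hb.symm h₁ h₀, hb, hb₀L, hb₁L⟩

noncomputable def level (T : Set (List Bool)) (s : List Bool) : ℕ :=
  fatLevel T (splitHeight T s)

theorem length_le_level (hT : SplittingTree T) {s : List Bool} (hs : s ∈ T) :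
    s.length ≤ level T s := by
  obtain ⟨b₀, -, -, -, hsb₀, -, -, hb₀L, -⟩ := splitHeight_spec hT.1 hs
  exact hsb₀.length_le.trans (hb₀L.trans (fatLevel_spec hT _).1)

theorem level_le_of_not_covered (hT : SplittingTree T) {s t : List Bool} (hs : s ∈ T)
    (h : ¬ Covered T s t) : level T t ≤ level T s :=
  fatLevel_mono hT (splitHeight_le_of_not_covered hT.1 hs h)

noncomputable def weight (T : Set (List Bool)) (s t : List Bool) : Finset (List Bool) :=
  Set.Finite.toFinset (s := {u | u ∈ T ∧ s <+: u ∧ Incomparable u t ∧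
      u.length ≤ level T t + 1})
    ((List.finite_length_le Bool _).subset fun _ hu ↦ hu.2.2.2)

theorem mem_weight {s t u : List Bool} :
    u ∈ weight T s t ↔
      u ∈ T ∧ s <+: u ∧ Incomparable u t ∧ u.length ≤ level T t + 1 :=
  Set.Finite.mem_toFinset _

theorem isWeight_weight (T : Set (List Bool)) : IsWeight T (weight T) := by
  intro s _ t _ u hu
  obtain ⟨huT, hsu, hut, -⟩ := mem_weight.1 hu
  exact ⟨⟨huT, Or.inr hsu⟩, fun ⟨_, htu⟩ ↦ htu.elim hut.1 hut.2⟩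

theorem splitsAt_weight (hT : SplittingTree T) {s t : List Bool} (hc : Covered T s t)
    {n : ℕ} (hsn : level T s ≤ n) (hnt : n ≤ level T t) :
    SplitsAt {u | u ∈ weight T s t ∧ s <+: u} n := by
  obtain ⟨b, hb, hsb, hbL, hbt⟩ := hc
  obtain ⟨hLs, hsplit⟩ := fatLevel_spec hT (splitHeight T s)
  intro c
  obtain ⟨u, ⟨huT, hbu⟩, huc⟩ := hsplit n hsn b hb hbL c
  have hnu : n < u.length := (List.getElem?_eq_some_iff.1 huc).1
  have hbn : b.length ≤ n := hbL.trans (hLs.trans hsn)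
  have hbu : b <+: u.take (n + 1) :=
    List.prefix_take_iff.2 ⟨prefix_of_compatible_of_length_le hbu (by omega), by omega⟩
  refine ⟨u.take (n + 1), ⟨mem_weight.2 ⟨hT.1.1 u huT _ (List.take_prefix _ _),
    hsb.trans hbu, hbt.of_prefix hbu, ?_⟩, hsb.trans hbu⟩, by simp [huc]⟩
  simp only [List.length_take]
  omega

theorem eventually_splitsAt_of_chain (hT : SplittingTree T) {S : Set (List Bool)}
    (hST : S ⊆ T) {s₀ : List Bool} {f : ℕ → List Bool} (hf : Injective f)
    (hfS : ∀ k, f k ∈ restrict S s₀) (hweight : ∀ k, ↑(weight T (f k) (f (k + 1))) ⊆ S) :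
    ∀ᶠ n in atTop, SplitsAt {u | u ∈ S ∧ s₀ <+: u} n := by
  have hfT : ∀ k, f k ∈ T := fun k ↦ hST (hfS k).1
  obtain ⟨K, hK⟩ := eventually_atTop.1 (eventually_lt_length hf s₀.length)
  filter_upwards [eventually_ge_atTop (level T (f K))] with n hn
  have hunbounded : ∃ k ≥ K, n < level T (f k) := by
    obtain ⟨k, hkn, hkK⟩ := ((eventually_lt_length hf n).and (eventually_ge_atTop K)).exists
    exact ⟨k, hkK, hkn.trans_le (length_le_level hT (hfT k))⟩
  obtain ⟨k, hkK, hkn, hnk⟩ :=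
    Nat.exists_le_lt_succ (e := fun k ↦ level T (f k)) hn hunbounded
  have hcov : Covered T (f k) (f (k + 1)) := by
    by_contra h
    exact (level_le_of_not_covered hT (hfT k) h).not_gt (hkn.trans_lt hnk)
  have hs₀ : s₀ <+: f k := prefix_of_compatible_of_length_le (hfS k).2 (hK k hkK).le
  exact (splitsAt_weight hT hcov hkn hnk.le).mono fun u ⟨hu, hku⟩ ↦
    ⟨hweight k hu, hs₀.trans hku⟩

end SplittingForcing

/-- Splitting forcing is weighted: for every splitting tree `T` there is a weight
`ρ` on `T` such that every tree `S` with `S ≤_ρ T` is again a splitting tree. -/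
theorem stmt9 (T : Set (List Bool)) (hT : SplittingTree T) :
    ∃ ρ : List Bool → List Bool → Finset (List Bool), IsWeight T ρ ∧
      ∀ S : Set (List Bool), IsTree S → LeRho ρ T S → SplittingTree S := by
  open SplittingForcing in
  refine ⟨weight T, isWeight_weight T, fun S hS ⟨hST, hdense⟩ ↦ ?_⟩
  have hsplit : ∀ s ∈ S, ∃ s₀, s <+: s₀ ∧
      ∀ᶠ n in Filter.atTop, SplitsAt {u | u ∈ S ∧ s₀ <+: u} n := by
    intro s hs
    obtain ⟨s₀, -, hss₀, f, hf, -, hfS, hweight⟩ := hdense s hs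
    exact ⟨s₀, hss₀, eventually_splitsAt_of_chain hT hST hf hfS hweight⟩
  refine ⟨⟨hS, fun t ht ↦ ?_⟩, fun s hs ↦ ?_⟩
  · obtain ⟨s₀, hts₀, h⟩ := hsplit t ht
    obtain ⟨n, hn⟩ := h.exists
    obtain ⟨u₀, ⟨hu₀, h₀⟩, u₁, ⟨hu₁, h₁⟩, hu⟩ := hn.exists_incomparable
    exact ⟨u₀, hu₀, u₁, hu₁, hts₀.trans h₀, hts₀.trans h₁, hu⟩
  · obtain ⟨s₀, hss₀, h⟩ := hsplit s hs
    exact fat_iff_eventually_splitsAt.2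
      (h.mono fun n hn ↦ hn.mono fun u hu ↦ ⟨hu.1, Or.inr (hss₀.trans hu.2)⟩)
end

section
/- Sacks forcing is weighted: for every perfect tree T ⊆ 2^{<ω} there is a weight ρ on T such that any tree S with S ≤_ρ T is perfect. Explicitly, one can take ρ(s,t) to consist of all r⌢i ∈ T_s ∖ T_t such that r⌢(1−i) ∈ T and |r| is minimal with this property. -/
/-!
Write "comparable" for `SymmGen (· <+: ·)`. A node `t` of `S` is split in `S` as soon as two
incomparable nodes of `S` are both comparable with `t`, since both must then extend `t`.
For `S ≤_ρ T` and `t ∈ S`, take the sequence `(f n)` given by density above `t`. If two of its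
terms are incomparable we are done. Otherwise the `f n` lie on one branch of `T` and their
lengths tend to infinity, so after dropping finitely many terms they all extend `t`. Since `T`
is perfect, a splitting child `c` of `T` above `f 0` leaves that branch, and at the last index
`n` with `f n` comparable with `c`, the node `c` witnesses that `ρ(f n, f (n+1))` is nonempty.
Its elements lie in `S`, are comparable with `t` and incomparable with `f (n+1)`.
-/

open Relation

section Prefix

variable {α : Type*} {a b c s t u v x y : List α}

theorem symmGen_prefix_of_prefix_of_prefix (ha : a <+: c) (hb : b <+: c) :
    SymmGen (· <+: ·) a b :=
  List.prefix_or_prefix_of_prefix ha hb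

theorem Relation.SymmGen.prefix_of_length_le (h : SymmGen (· <+: ·) a b)
    (hl : a.length ≤ b.length) : a <+: b := by
  rcases h with h | h
  · exact h
  · rw [h.eq_of_length (le_antisymm h.length_le hl)]

theorem Relation.SymmGen.of_prefix_right (h : SymmGen (· <+: ·) u s) (hts : t <+: s) :
    SymmGen (· <+: ·) u t := by
  rcases h with h | h
  · exact symmGen_prefix_of_prefix_of_prefix h hts
  · exact .of_rel_symm (hts.trans h)

theorem prefix_of_symmGen_of_not_symmGen (ha : SymmGen (· <+: ·) a t)
    (hb : SymmGen (· <+: ·) b t) (hab : ¬SymmGen (· <+: ·) a b) : t <+: a := by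
  refine ha.resolve_left fun hat => hab ?_
  rcases hb with hbt | htb
  · exact symmGen_prefix_of_prefix_of_prefix hat hbt
  · exact .of_rel (hat.trans htb)

theorem prefix_of_prefix_of_not_symmGen (hva : v <+: a) (hvb : v <+: b) (hxa : x <+: a)
    (hyb : y <+: b) (hxy : ¬SymmGen (· <+: ·) x y) : v <+: x := by
  refine (symmGen_prefix_of_prefix_of_prefix hva hxa).resolve_right fun hxv => hxy ?_
  exact symmGen_prefix_of_prefix_of_prefix (hxv.trans hvb) hyb

end Prefix

theorem not_symmGen_append_singleton_not (r : List Bool) (i : Bool) :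
    ¬SymmGen (· <+: ·) (r ++ [i]) (r ++ [!i]) := by
  intro h
  simpa using (h.prefix_of_length_le (by simp)).eq_of_length (by simp)

theorem exists_append_singleton_prefix_of_not_symmGen :
    ∀ {a b : List Bool}, ¬SymmGen (· <+: ·) a b →
      ∃ (r : List Bool) (i : Bool), r ++ [i] <+: a ∧ r ++ [!i] <+: b
  | [], _, h => absurd (.of_rel List.nil_prefix) h
  | _ :: _, [], h => absurd (.of_rel_symm List.nil_prefix) h
  | x :: a, y :: b, h => by
    by_cases hxy : x = y
    · subst hxy
      have hab : ¬SymmGen (· <+: ·) a b := fun h' =>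
        h (Or.imp (List.prefix_cons_inj x).2 (List.prefix_cons_inj x).2 h')
      obtain ⟨r, i, hra, hrb⟩ := exists_append_singleton_prefix_of_not_symmGen hab
      exact ⟨x :: r, i, (List.prefix_cons_inj x).2 hra, (List.prefix_cons_inj x).2 hrb⟩
    · refine ⟨[], x, List.cons_prefix_cons.2 ⟨rfl, List.nil_prefix⟩,
        List.cons_prefix_cons.2 ⟨?_, List.nil_prefix⟩⟩
      cases x <;> cases y <;> simp_all

theorem mem_restrict_iff {T : Set (List Bool)} {s u : List Bool} :
    u ∈ restrict T s ↔ u ∈ T ∧ SymmGen (· <+: ·) u s := Iff.rfl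

theorem PerfectTree.exists_split_above {T : Set (List Bool)} (hT : PerfectTree T) {v : List Bool}
    (hv : v ∈ T) : ∃ (r : List Bool) (i : Bool), r ++ [i] ∈ T ∧ r ++ [!i] ∈ T ∧
      v <+: r ++ [i] ∧ v <+: r ++ [!i] := by
  obtain ⟨a, ha, b, hb, hva, hvb, hab, hba⟩ := hT.2 v hv
  obtain ⟨r, i, hra, hrb⟩ :=
    exists_append_singleton_prefix_of_not_symmGen (not_or.2 ⟨hab, hba⟩)
  have hri := not_symmGen_append_singleton_not r i
  exact ⟨r, i, hT.1 a ha _ hra, hT.1 b hb _ hrb,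
    prefix_of_prefix_of_not_symmGen hva hvb hra hrb hri,
    prefix_of_prefix_of_not_symmGen hvb hva hrb hra fun h => hri h.symm⟩

theorem perfectTree_of_forall_exists_not_symmGen {S : Set (List Bool)} (hS : IsTree S)
    (h : ∀ t ∈ S, ∃ a ∈ S, ∃ b ∈ S,
      SymmGen (· <+: ·) a t ∧ SymmGen (· <+: ·) b t ∧ ¬SymmGen (· <+: ·) a b) :
    PerfectTree S := by
  refine ⟨hS, fun t ht => ?_⟩
  obtain ⟨a, ha, b, hb, hat, hbt, hab⟩ := h t ht
  exact ⟨a, ha, b, hb, prefix_of_symmGen_of_not_symmGen hat hbt hab,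
    prefix_of_symmGen_of_not_symmGen hbt hat fun h => hab h.symm, not_or.1 hab⟩

section Chain

variable {α : Type*} {f : ℕ → List α} (hinj : Function.Injective f)
  (hchain : ∀ m k, SymmGen (· <+: ·) (f m) (f k))
include hinj hchain

theorem finite_setOf_length_lt_of_chain (B : ℕ) : {m | (f m).length < B}.Finite := by
  refine (Set.finite_Iio B).preimage fun m _ k _ hmk => hinj ?_
  exact ((hchain m k).prefix_of_length_le hmk.le).eq_of_length hmk

theorem exists_forall_prefix_of_chain {t : List α} (ht : ∀ m, SymmGen (· <+: ·) (f m) t) :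
    ∃ M, ∀ m, t <+: f (M + m) := by
  obtain ⟨M, hM⟩ := (finite_setOf_length_lt_of_chain hinj hchain t.length).bddAbove
  refine ⟨M + 1, fun m => (ht _).symm.prefix_of_length_le (not_lt.1 fun hlt => ?_)⟩
  have := hM hlt
  omega

theorem finite_setOf_symmGen_of_chain {c : List α} {N : ℕ}
    (hN : ¬SymmGen (· <+: ·) (f N) c) : {m | SymmGen (· <+: ·) (f m) c}.Finite := by
  refine (finite_setOf_length_lt_of_chain hinj hchain (c.length + 1)).subset fun m hm => ?_
  have hmc : f m <+: c := by
    refine hm.resolve_right fun hcm => hN ?_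
    rcases hchain N m with hNm | hmN
    · exact symmGen_prefix_of_prefix_of_prefix hNm hcm
    · exact .of_rel_symm (hcm.trans hmN)
  exact Nat.lt_succ_of_le hmc.length_le

end Chain

section SacksWeight

variable {T S : Set (List Bool)} {s t u : List Bool}

def IsSplitCandidate (T : Set (List Bool)) (s t u : List Bool) : Prop :=
  u ∈ restrict T s \ restrict T t ∧
    ∃ (r : List Bool) (i : Bool), u = r ++ [i] ∧ r ++ [!i] ∈ T

def IsMinimalSplitCandidate (T : Set (List Bool)) (s t u : List Bool) : Prop :=
  IsSplitCandidate T s t u ∧ ∀ v, IsSplitCandidate T s t v → u.length ≤ v.length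

theorem finite_setOf_isMinimalSplitCandidate (T : Set (List Bool)) (s t : List Bool) :
    {u | IsMinimalSplitCandidate T s t u}.Finite := by
  rcases Set.eq_empty_or_nonempty {u | IsMinimalSplitCandidate T s t u} with h | ⟨u₀, hu₀⟩
  · exact h ▸ Set.finite_empty
  · exact (List.finite_length_eq Bool u₀.length).subset fun u hu =>
      le_antisymm (hu.2 _ hu₀.1) (hu₀.2 _ hu.1)

noncomputable def sacksWeight (T : Set (List Bool)) (s t : List Bool) : Finset (List Bool) :=
  (finite_setOf_isMinimalSplitCandidate T s t).toFinset

theorem mem_sacksWeight : u ∈ sacksWeight T s t ↔ IsMinimalSplitCandidate T s t u :=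
  Set.Finite.mem_toFinset _

theorem mem_sacksWeight_iff : u ∈ sacksWeight T s t ↔
    ∃ (r : List Bool) (i : Bool), u = r ++ [i] ∧
      u ∈ restrict T s \ restrict T t ∧ r ++ [!i] ∈ T ∧
      ∀ (r' : List Bool) (i' : Bool), r' ++ [i'] ∈ restrict T s \ restrict T t →
        r' ++ [!i'] ∈ T → r.length ≤ r'.length := by
  rw [mem_sacksWeight]
  constructor
  · rintro ⟨⟨hu, r, i, rfl, hsib⟩, hmin⟩
    exact ⟨r, i, rfl, hu, hsib, fun r' i' hu' hsib' => by
      simpa using hmin _ ⟨hu', r', i', rfl, hsib'⟩⟩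
  · rintro ⟨r, i, rfl, hu, hsib, hmin⟩
    exact ⟨⟨hu, r, i, rfl, hsib⟩, by
      rintro _ ⟨hv, r', i', rfl, hsib'⟩
      simpa using hmin r' i' hv hsib'⟩

theorem sacksWeight_isWeight (T : Set (List Bool)) : IsWeight T (sacksWeight T) :=
  fun _ _ _ _ _ hu => (mem_sacksWeight.1 hu).1.1

theorem exists_mem_sacksWeight {c : List Bool} (hc : IsSplitCandidate T s t c) :
    ∃ u, u ∈ sacksWeight T s t := by
  obtain ⟨u, hu, hmin⟩ := exists_minimalFor_of_wellFoundedLT _ List.length ⟨c, hc⟩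
  exact ⟨u, mem_sacksWeight.2 ⟨hu, fun v hv => (le_total _ _).elim (hmin hv) id⟩⟩

theorem exists_splitCandidate_of_chain (hT : PerfectTree T) {f : ℕ → List Bool}
    (hinj : Function.Injective f) (hchain : ∀ m k, SymmGen (· <+: ·) (f m) (f k))
    (hf : ∀ m, f m ∈ T) : ∃ n c, IsSplitCandidate T (f n) (f (n + 1)) c := by
  obtain ⟨r, i, hri, hrni, h0i, h0ni⟩ := hT.exists_split_above (hf 0)
  obtain ⟨N, hN⟩ :=
    (finite_setOf_length_lt_of_chain hinj hchain (r.length + 1)).infinite_compl.nonempty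
  replace hN : r.length + 1 ≤ (f N).length := not_lt.1 hN
  -- at most one of the two children of `r` lies below `f N`
  obtain ⟨j, hjT, hsibT, h0j, hNj⟩ : ∃ j, r ++ [j] ∈ T ∧ r ++ [!j] ∈ T ∧
      f 0 <+: r ++ [j] ∧ ¬SymmGen (· <+: ·) (f N) (r ++ [j]) := by
    by_cases hiN : r ++ [i] <+: f N
    · refine ⟨!i, hrni, by simpa using hri, h0ni, fun h => ?_⟩
      refine not_symmGen_append_singleton_not r i ?_
      exact symmGen_prefix_of_prefix_of_prefix hiN (h.symm.prefix_of_length_le (by simpa using hN))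
    · exact ⟨i, hri, hrni, h0i, fun h => hiN (h.symm.prefix_of_length_le (by simpa using hN))⟩
  obtain ⟨n, hn, hmax⟩ := Set.exists_max_image _ id
    (finite_setOf_symmGen_of_chain hinj hchain hNj) ⟨0, .of_rel h0j⟩
  refine ⟨n, r ++ [j], ⟨⟨hjT, hn.symm⟩, fun h => ?_⟩, r, j, rfl, hsibT⟩
  exact Nat.not_succ_le_self n (hmax (n + 1) h.2.symm)

theorem perfectTree_of_leRho (hT : PerfectTree T) (hS : IsTree S)
    (hle : LeRho (sacksWeight T) T S) : PerfectTree S := by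
  refine perfectTree_of_forall_exists_not_symmGen hS fun t ht => ?_
  obtain ⟨s₀, -, hts₀, f, hinj, -, hfS, hρ⟩ := hle.2 t ht
  have hft : ∀ m, SymmGen (· <+: ·) (f m) t := fun m =>
    (mem_restrict_iff.1 (hfS m)).2.of_prefix_right hts₀
  by_cases hchain : ∀ m k, SymmGen (· <+: ·) (f m) (f k)
  · obtain ⟨M, hM⟩ := exists_forall_prefix_of_chain hinj hchain hft
    obtain ⟨n, c, hc⟩ := exists_splitCandidate_of_chain hT (hinj.comp (add_right_injective M))
      (fun m k => hchain _ _) fun m => hle.1 (hfS (M + m)).1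
    obtain ⟨u, hu⟩ := exists_mem_sacksWeight hc
    obtain ⟨⟨huT, hun⟩, hun1⟩ := (mem_sacksWeight.1 hu).1.1
    exact ⟨u, hρ _ hu, f (M + n + 1), (hfS _).1, SymmGen.of_prefix_right hun (hM n), hft _,
      fun h => hun1 ⟨huT, h⟩⟩
  · simp only [not_forall] at hchain
    obtain ⟨m, k, hmk⟩ := hchain
    exact ⟨f m, (hfS m).1, f k, (hfS k).1, hft m, hft k, hmk⟩

end SacksWeight

/-- Sacks forcing is weighted: for every perfect tree `T ⊆ 2^{<ω}` there is a
weight `ρ` on `T` such that any tree `S` with `S ≤_ρ T` is perfect. One can take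
`ρ(s,t)` to consist of all `r⌢i ∈ T_s ∖ T_t` with `r⌢(1−i) ∈ T` and `|r|`
minimal with this property. -/
theorem stmt10 (T : Set (List Bool)) (hT : PerfectTree T) :
    ∃ ρ : List Bool → List Bool → Finset (List Bool), IsWeight T ρ ∧
      (∀ S : Set (List Bool), IsTree S → LeRho ρ T S → PerfectTree S) ∧
      ∀ s ∈ T, ∀ t ∈ T, ∀ u : List Bool, (u ∈ ρ s t ↔
        ∃ (r : List Bool) (i : Bool), u = r ++ [i] ∧
          u ∈ restrict T s \ restrict T t ∧ r ++ [!i] ∈ T ∧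
          ∀ (r' : List Bool) (i' : Bool), r' ++ [i'] ∈ restrict T s \ restrict T t →
            r' ++ [!i'] ∈ T → r.length ≤ r'.length) :=
  ⟨sacksWeight T, sacksWeight_isWeight T, fun _ hS hle => perfectTree_of_leRho hT hS hle,
    fun _ _ _ _ _ => mem_sacksWeight_iff⟩
end

section
/- Let T be a perfect tree, ρ a weight on T, T₀ a finite subtree of T, k ∈ ω, and D ⊆ T^k a dense open subset (in the coordinatewise extension order). Then there is a finite subtree T₁ with T₀ ◁_ρ T₁ such that for all distinct terminal nodes σ₀,…,σ_{k−1} of T₀ and all terminal nodes σ'₀,…,σ'_{k−1} of T₁ with σ_l ⊆ σ'_l for each l, the tuple (σ'₀,…,σ'_{k−1}) belongs to D. -/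
/-- `σ` is a terminal node of `T₀`. -/
def Terminal (T₀ : Set (List Bool)) (σ : List Bool) : Prop :=
  σ ∈ T₀ ∧ ∀ t ∈ T₀, σ <+: t → t = σ

/-- `T₁` properly end-extends `T₀`. -/
def EndExt (T₀ T₁ : Set (List Bool)) : Prop :=
  T₀ ⊂ T₁ ∧ ∀ t ∈ T₁, t ∉ T₀ → ∃ σ, Terminal T₀ σ ∧ σ <+: t

/-- `T₀ ◁_ρ T₁`: `T₁` end-extends `T₀` and every terminal node `σ` of `T₀` begins
an injective `ρ`-connected path of length `≥ 2` inside `(T₁)_σ` ending at a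
terminal node of `T₁`. -/
def TriLt (ρ : List Bool → List Bool → Finset (List Bool))
    (T₀ T₁ : Set (List Bool)) : Prop :=
  EndExt T₀ T₁ ∧ ∀ σ, Terminal T₀ σ →
    ∃ l : List (List Bool), 2 ≤ l.length ∧ l.Nodup ∧
      (∀ s ∈ l, s ∈ restrict T₁ σ) ∧ l.head? = some σ ∧
      (∃ τ, l.getLast? = some τ ∧ Terminal T₁ τ) ∧
      l.Chain' (fun a b => ↑(ρ a b) ⊆ T₁)

/-- `D ⊆ T^k` is dense open in the coordinatewise extension order. -/
def DenseOpenTuple (k : ℕ) (T : Set (List Bool)) (D : Set (Fin k → List Bool)) : Prop :=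
  (∀ σ ∈ D, ∀ l, σ l ∈ T) ∧
  (∀ σ : Fin k → List Bool, (∀ l, σ l ∈ T) → ∃ σ' ∈ D, ∀ l, σ l <+: σ' l) ∧
  (∀ σ ∈ D, ∀ σ' : Fin k → List Bool, (∀ l, σ' l ∈ T) → (∀ l, σ l <+: σ' l) → σ' ∈ D)

/-!
Above every terminal node `σ` of `T₀` we grow a path `σ = V₀ ⊊ V₁ ⊊ ⋯ ⊊ V_{k+1}`. The step
`V_r → V_{r+1}` forces the finite set `ρ(V_r, V_{r+1})` of side nodes into `T₁`; every side node `z`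
is later extended to a cover `c z`. Before choosing `V_{r+1}` we extend all current path heads and
all covers of earlier side nodes at once so that every injective `k`-tuple of them lies in `D`
(finitely many dense open conditions can be met simultaneously). A terminal node of `T₁` above `σ`
is either `V_{k+1}` or the cover of a side node of some step `r`, and then it extends an admissible
tuple entry at every level except `r + 1`. Since `k` coordinates spoil at most `k` of the `k + 1`
levels, some level works for all coordinates at once, and openness of `D` concludes.
-/

open Function

lemma IsAntichain.eq_of_prefix_of_prefix {α : Type*} {Λ : Set (List α)}
    (hΛ : IsAntichain (· <+: ·) Λ) {σ τ x : List α} (hσ : σ ∈ Λ) (hτ : τ ∈ Λ)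
    (hσx : σ <+: x) (hτx : τ <+: x) : σ = τ :=
  (List.prefix_or_prefix_of_prefix hσx hτx).elim (hΛ.eq hσ hτ) fun h => (hΛ.eq hτ hσ h).symm

lemma IsAntichain.injective_of_prefix {α β ι : Type*} {Λ : Set (List α)}
    (hΛ : IsAntichain (· <+: ·) Λ) {b : ι → List α} (hb : Injective b) (hbΛ : ∀ i, b i ∈ Λ)
    {q : ι → β} (key : β → List α) (hq : ∀ i, b i <+: key (q i)) : Injective q :=
  fun i j h => hb (hΛ.eq_of_prefix_of_prefix (hbΛ i) (hbΛ j) (hq i) (h ▸ hq j))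

lemma isAntichain_terminal (T₀ : Set (List Bool)) :
    IsAntichain (· <+: ·) {σ | Terminal T₀ σ} :=
  fun _ hσ _ hτ hne hστ => hne (hσ.2 _ hτ.1 hστ).symm

lemma exists_terminal {T₀ : Set (List Bool)} (hfin : T₀.Finite) (hne : T₀.Nonempty) :
    ∃ σ, Terminal T₀ σ := by
  obtain ⟨σ, hσ, hmax⟩ := Set.exists_max_image T₀ List.length hfin hne
  exact ⟨σ, hσ, fun t ht hσt => (hσt.eq_of_length_le (hmax t ht)).symm⟩

lemma PerfectTree.exists_prefix_length_lt {T : Set (List Bool)} (hT : PerfectTree T)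
    {t : List Bool} (ht : t ∈ T) : ∃ s ∈ T, t <+: s ∧ t.length < s.length := by
  obtain ⟨s₀, hs₀, s₁, -, h₀, h₁, h₀₁, -⟩ := hT.2 t ht
  refine ⟨s₀, hs₀, h₀, lt_of_le_of_ne h₀.length_le fun h => h₀₁ ?_⟩
  rwa [← h₀.eq_of_length h]

lemma IsWeight.branches_off {T : Set (List Bool)}
    {ρ : List Bool → List Bool → Finset (List Bool)} (hρ : IsWeight T ρ) {s t z : List Bool}
    (hs : s ∈ T) (ht : t ∈ T) (hst : s <+: t) (hz : z ∈ ρ s t) :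
    z ∈ T ∧ s <+: z ∧ ¬z <+: t ∧ ¬t <+: z := by
  obtain ⟨⟨hzT, hsz⟩, hzt⟩ := hρ s hs t ht hz
  have hzt : ¬z <+: t ∧ ¬t <+: z := not_or.mp fun h => hzt ⟨hzT, h⟩
  exact ⟨hzT, hsz.resolve_left fun h => hzt.1 (h.trans hst), hzt⟩

section Density

variable {k : ℕ} {T : Set (List Bool)} {D : Set (Fin k → List Bool)} {α : Type*}

lemma DenseOpenTuple.exists_extend_comp_mem (hD : DenseOpenTuple k T D) {S : Set α}
    {g : α → List Bool} (hg : ∀ a ∈ S, g a ∈ T) {q : Fin k → α} (hq : Injective q)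
    (hqS : ∀ l, q l ∈ S) :
    ∃ g' : α → List Bool, (∀ a, g a <+: g' a) ∧ (∀ a ∈ S, g' a ∈ T) ∧ g' ∘ q ∈ D := by
  obtain ⟨τ, hτD, hgτ⟩ := hD.2.1 (g ∘ q) fun l => hg _ (hqS l)
  have hext : ∀ a, (∃ l, q l = a ∧ extend q τ g a = τ l) ∨ extend q τ g a = g a := by
    intro a
    by_cases h : ∃ l, q l = a
    · obtain ⟨l, rfl⟩ := h
      exact Or.inl ⟨l, rfl, hq.extend_apply τ g l⟩
    · exact Or.inr (extend_apply' τ g a h)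
  refine ⟨extend q τ g, fun a => ?_, fun a ha => ?_, ?_⟩
  · rcases hext a with ⟨l, rfl, he⟩ | he <;> rw [he]
    exact hgτ l
  · rcases hext a with ⟨l, -, he⟩ | he <;> rw [he]
    exacts [hD.1 τ hτD l, hg a ha]
  · rwa [extend_comp hq]

lemma DenseOpenTuple.exists_extend_forall_comp_mem (hD : DenseOpenTuple k T D) {S : Set α}
    {g : α → List Bool} (hg : ∀ a ∈ S, g a ∈ T) (Q : List (Fin k → α))
    (hQ : ∀ q ∈ Q, Injective q ∧ ∀ l, q l ∈ S) :
    ∃ g' : α → List Bool, (∀ a, g a <+: g' a) ∧ (∀ a ∈ S, g' a ∈ T) ∧ ∀ q ∈ Q, g' ∘ q ∈ D := by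
  induction Q with
  | nil => exact ⟨g, fun _ => List.prefix_rfl, hg, by simp⟩
  | cons q Q ih =>
    obtain ⟨g₁, hgg₁, hg₁T, hg₁D⟩ := ih fun q' hq' => hQ q' (List.mem_cons_of_mem _ hq')
    obtain ⟨hq, hqS⟩ := hQ q List.mem_cons_self
    obtain ⟨g₂, hg₁g₂, hg₂T, hg₂D⟩ := hD.exists_extend_comp_mem hg₁T hq hqS
    refine ⟨g₂, fun a => (hgg₁ a).trans (hg₁g₂ a), hg₂T, ?_⟩
    rintro q' (_ | ⟨_, hq'⟩)
    · exact hg₂D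
    · exact hD.2.2 _ (hg₁D q' hq') _ (fun l => hg₂T _ ((hQ q' (.tail _ hq')).2 l))
        fun l => hg₁g₂ _

theorem DenseOpenTuple.exists_extend_forall_injective (hD : DenseOpenTuple k T D)
    (S : Finset α) {g : α → List Bool} (hg : ∀ a ∈ S, g a ∈ T) :
    ∃ g' : α → List Bool, (∀ a, g a <+: g' a) ∧ (∀ a ∈ S, g' a ∈ T) ∧
      ∀ q : Fin k → α, Injective q → (∀ l, q l ∈ S) →
        ∀ F : Fin k → List Bool, (∀ l, F l ∈ T) → (∀ l, g' (q l) <+: F l) → F ∈ D := by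
  classical
  obtain ⟨g', hgg', hg'T, hg'D⟩ := hD.exists_extend_forall_comp_mem hg
    ((Fintype.piFinset fun _ : Fin k => S).filter Injective).toList
    (by simpa using fun q hqS hq => ⟨hq, hqS⟩)
  exact ⟨g', hgg', hg'T, fun q hq hqS F hFT hqF =>
    hD.2.2 _ (hg'D q (by simpa using ⟨hqS, hq⟩)) F hFT hqF⟩

end Density

/-- A ladder of height `d` over the antichain `Λ`, started at the heads `V` with pending side
nodes `J` (currently extended to `cv`). `rung r σ` is the `r`-th node of the path above `σ`,
`ρ (rung r σ) (rung (r + 1) σ)` are the side nodes of step `r`, and `cover z` extends the side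
node `z`. In `dense`, the admissible entries over `b l` at level `lev` are the rung of level `lev`
and the covers of side nodes created before step `lev - 1`. -/
structure Ladder (T : Set (List Bool)) (ρ : List Bool → List Bool → Finset (List Bool))
    {k : ℕ} (D : Set (Fin k → List Bool)) (Λ : Finset (List Bool)) (d : ℕ)
    (V : List Bool → List Bool) (J : Finset (List Bool)) (cv : List Bool → List Bool) where
  rung : ℕ → List Bool → List Bool
  cover : List Bool → List Bool
  rung_zero : rung 0 = V
  rung_succ : ∀ σ ∈ Λ, ∀ r < d, rung r σ <+: rung (r + 1) σ ∧
    (rung r σ).length < (rung (r + 1) σ).length ∧ rung (r + 1) σ ∈ T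
  cover_pending : ∀ z ∈ J, cv z <+: cover z ∧ cover z ∈ T
  cover_side : ∀ σ ∈ Λ, ∀ r < d, ∀ z ∈ ρ (rung r σ) (rung (r + 1) σ),
    z <+: cover z ∧ cover z ∈ T
  dense : ∀ lev, 1 ≤ lev → lev ≤ d → ∀ b : Fin k → List Bool, Injective b → (∀ l, b l ∈ Λ) →
    ∀ F : Fin k → List Bool, (∀ l, F l ∈ T) →
    (∀ l, rung lev (b l) <+: F l ∨ (∃ z ∈ J, b l <+: z ∧ cover z <+: F l) ∨
      ∃ r, r + 1 < lev ∧ ∃ z ∈ ρ (rung r (b l)) (rung (r + 1) (b l)), cover z <+: F l) →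
    F ∈ D

namespace Ladder

variable {T : Set (List Bool)} {ρ : List Bool → List Bool → Finset (List Bool)} {k : ℕ}
  {D : Set (Fin k → List Bool)} {Λ : Finset (List Bool)} {d : ℕ}
  {V V₁ cv cv₁ : List Bool → List Bool} {J : Finset (List Bool)}

def nil (hJ : ∀ z ∈ J, cv z ∈ T) : Ladder T ρ D Λ 0 V J cv where
  rung _ := V
  cover := cv
  rung_zero := rfl
  rung_succ _ _ _ h := absurd h (Nat.not_lt_zero _)
  cover_pending z hz := ⟨List.prefix_rfl, hJ z hz⟩
  cover_side _ _ _ h := absurd h (Nat.not_lt_zero _)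
  dense _ h₁ h₂ := absurd (h₁.trans h₂) (by omega)

/-- Prepends the step `V → V₁`, whose side nodes join the pending ones; `hdense` becomes level `1`
of `dense`. -/
def cons (hρ : IsWeight T ρ) (hV : ∀ σ ∈ Λ, V σ ∈ T ∧ σ <+: V σ)
    (hV₁ : ∀ σ ∈ Λ, V σ <+: V₁ σ ∧ (V σ).length < (V₁ σ).length ∧ V₁ σ ∈ T)
    (hcv₁ : ∀ z ∈ J, cv z <+: cv₁ z)
    (hJ₁ : ∀ z ∈ J ∪ Λ.biUnion fun σ => ρ (V σ) (V₁ σ), z <+: J.piecewise cv₁ id z)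
    (hdense : ∀ b : Fin k → List Bool, Injective b → (∀ l, b l ∈ Λ) →
      ∀ F : Fin k → List Bool, (∀ l, F l ∈ T) →
      (∀ l, V₁ (b l) <+: F l ∨ ∃ z ∈ J, b l <+: z ∧ cv₁ z <+: F l) → F ∈ D)
    (L : Ladder T ρ D Λ d V₁ (J ∪ Λ.biUnion fun σ => ρ (V σ) (V₁ σ)) (J.piecewise cv₁ id)) :
    Ladder T ρ D Λ (d + 1) V J cv where
  rung
    | 0 => V
    | r + 1 => L.rung r
  cover := L.cover
  rung_zero := rfl
  rung_succ
    | σ, hσ, 0, _ => by simpa only [L.rung_zero] using hV₁ σ hσ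
    | σ, hσ, r + 1, hr => L.rung_succ σ hσ r (by omega)
  cover_pending z hz := by
    have hcover := L.cover_pending z (Finset.mem_union_left _ hz)
    rw [Finset.piecewise_eq_of_mem _ _ _ hz] at hcover
    exact ⟨(hcv₁ z hz).trans hcover.1, hcover.2⟩
  cover_side
    | σ, hσ, 0, _, z, hz => by
      have hzJ₁ : z ∈ J ∪ Λ.biUnion fun σ => ρ (V σ) (V₁ σ) := by
        dsimp only at hz
        rw [L.rung_zero] at hz
        exact Finset.mem_union_right _ (Finset.mem_biUnion.2 ⟨σ, hσ, hz⟩)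
      exact ⟨(hJ₁ z hzJ₁).trans (L.cover_pending z hzJ₁).1, (L.cover_pending z hzJ₁).2⟩
    | σ, hσ, r + 1, hr, z, hz => L.cover_side σ hσ r (by omega) z hz
  dense
    | 0, h, _ => absurd h (by omega)
    | 1, _, _ => fun b hb hbΛ F hFT hF => hdense b hb hbΛ F hFT fun l => by
      rcases hF l with h | ⟨z, hz, hbz, hzF⟩ | ⟨r, hr, -⟩
      · exact Or.inl (by dsimp only at h; rwa [L.rung_zero] at h)
      · refine Or.inr ⟨z, hz, hbz, .trans ?_ hzF⟩
        simpa [Finset.piecewise_eq_of_mem _ _ _ hz] using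
          (L.cover_pending z (Finset.mem_union_left _ hz)).1
      · omega
    | lev + 2, _, hlev => fun b hb hbΛ F hFT hF => L.dense (lev + 1) (by omega) (by omega) b hb
      hbΛ F hFT fun l => by
      rcases hF l with h | ⟨z, hz, hbz, hzF⟩ | ⟨_ | r, hr, z, hz, hzF⟩
      · exact Or.inl h
      · exact Or.inr (Or.inl ⟨z, Finset.mem_union_left _ hz, hbz, hzF⟩)
      · dsimp only at hz
        rw [L.rung_zero] at hz
        have hσ := hV (b l) (hbΛ l)
        have hVz := (hρ.branches_off hσ.1 (hV₁ _ (hbΛ l)).2.2 (hV₁ _ (hbΛ l)).1 hz).2.1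
        exact Or.inr (Or.inl ⟨z, Finset.mem_union_right _ (Finset.mem_biUnion.2 ⟨b l, hbΛ l, hz⟩),
          hσ.2.trans hVz, hzF⟩)
      · exact Or.inr (Or.inr ⟨r, by omega, z, hz, hzF⟩)

end Ladder

section Construction

variable {T : Set (List Bool)} {ρ : List Bool → List Bool → Finset (List Bool)} {k : ℕ}
  {D : Set (Fin k → List Bool)} {Λ : Finset (List Bool)}

lemma exists_next_stage (hT : PerfectTree T) (hD : DenseOpenTuple k T D)
    (hΛ : IsAntichain (· <+: ·) (Λ : Set (List Bool))) {V cv : List Bool → List Bool}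
    {J : Finset (List Bool)} (hV : ∀ σ ∈ Λ, V σ ∈ T) (hJ : ∀ z ∈ J, cv z ∈ T) :
    ∃ V₁ cv₁ : List Bool → List Bool,
      (∀ σ ∈ Λ, V σ <+: V₁ σ ∧ (V σ).length < (V₁ σ).length ∧ V₁ σ ∈ T) ∧
      (∀ z ∈ J, cv z <+: cv₁ z ∧ cv₁ z ∈ T) ∧
      ∀ b : Fin k → List Bool, Injective b → (∀ l, b l ∈ Λ) →
        ∀ F : Fin k → List Bool, (∀ l, F l ∈ T) →
        (∀ l, V₁ (b l) <+: F l ∨ ∃ z ∈ J, b l <+: z ∧ cv₁ z <+: F l) → F ∈ D := by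
  obtain ⟨g, hg, hgT, hgD⟩ := hD.exists_extend_forall_injective (Λ.disjSum J)
    (g := Sum.elim V cv) (by simpa [Finset.mem_disjSum] using ⟨hV, hJ⟩)
  choose! V₁ hV₁T hgV₁ hgV₁_lt using fun σ (hσ : σ ∈ Λ) =>
    hT.exists_prefix_length_lt (hgT (.inl σ) (Finset.inl_mem_disjSum.2 hσ))
  refine ⟨V₁, g ∘ .inr, fun σ hσ => ?_, fun z hz => ⟨hg (.inr z), hgT _ ?_⟩, ?_⟩
  · exact ⟨(hg (.inl σ)).trans (hgV₁ σ hσ),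
      (hg (.inl σ)).length_le.trans_lt (hgV₁_lt σ hσ), hV₁T σ hσ⟩
  · exact Finset.inr_mem_disjSum.2 hz
  intro b hb hbΛ F hFT hF
  have hentry : ∀ l, ∃ a ∈ Λ.disjSum J, b l <+: Sum.elim id id a ∧ g a <+: F l := by
    intro l
    rcases hF l with h | ⟨z, hz, hbz, hzF⟩
    · exact ⟨.inl (b l), Finset.inl_mem_disjSum.2 (hbΛ l), List.prefix_rfl,
        (hgV₁ _ (hbΛ l)).trans h⟩
    · exact ⟨.inr z, Finset.inr_mem_disjSum.2 hz, hbz, hzF⟩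
  choose q hqS hbq hqF using hentry
  exact hgD q (hΛ.injective_of_prefix hb hbΛ _ hbq) hqS F hFT hqF

theorem exists_ladder (hT : PerfectTree T) (hρ : IsWeight T ρ) (hD : DenseOpenTuple k T D)
    (hΛ : IsAntichain (· <+: ·) (Λ : Set (List Bool))) (d : ℕ) :
    ∀ (V : List Bool → List Bool) (J : Finset (List Bool)) (cv : List Bool → List Bool),
      (∀ σ ∈ Λ, V σ ∈ T ∧ σ <+: V σ) → (∀ z ∈ J, cv z ∈ T ∧ z <+: cv z) →
      Nonempty (Ladder T ρ D Λ d V J cv) := by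
  induction d with
  | zero => exact fun V J cv _ hJ => ⟨.nil fun z hz => (hJ z hz).1⟩
  | succ d ih =>
    intro V J cv hV hJ
    obtain ⟨V₁, cv₁, hV₁, hcv₁, hdense⟩ :=
      exists_next_stage hT hD hΛ (fun σ hσ => (hV σ hσ).1) fun z hz => (hJ z hz).1
    have hJ₁ : ∀ z ∈ J ∪ Λ.biUnion fun σ => ρ (V σ) (V₁ σ),
        J.piecewise cv₁ id z ∈ T ∧ z <+: J.piecewise cv₁ id z := by
      intro z hz
      by_cases hzJ : z ∈ J
      · rw [Finset.piecewise_eq_of_mem _ _ _ hzJ]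
        exact ⟨(hcv₁ z hzJ).2, (hJ z hzJ).2.trans (hcv₁ z hzJ).1⟩
      · obtain ⟨σ, hσ, hz⟩ := Finset.mem_biUnion.1 ((Finset.mem_union.1 hz).resolve_left hzJ)
        rw [Finset.piecewise_eq_of_notMem _ _ _ hzJ]
        exact ⟨(hρ.branches_off (hV σ hσ).1 (hV₁ σ hσ).2.2 (hV₁ σ hσ).1 hz).1, List.prefix_rfl⟩
    obtain ⟨L⟩ := ih V₁ _ _ (fun σ hσ => ⟨(hV₁ σ hσ).2.2, (hV σ hσ).2.trans (hV₁ σ hσ).1⟩) hJ₁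
    exact ⟨L.cons hρ hV hV₁ (fun z hz => (hcv₁ z hz).1) (fun z hz => (hJ₁ z hz).2) hdense⟩

end Construction

def extendTo (T₀ : Set (List Bool)) (G : Finset (List Bool)) : Set (List Bool) :=
  T₀ ∪ {x | ∃ g ∈ G, x <+: g}

section ExtendTo

variable {T₀ : Set (List Bool)} {G : Finset (List Bool)}

lemma isTree_extendTo (hT₀ : IsTree T₀) : IsTree (extendTo T₀ G) := by
  rintro s (hs | ⟨g, hg, hsg⟩) t hts
  exacts [Or.inl (hT₀ s hs t hts), Or.inr ⟨g, hg, hts.trans hsg⟩]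

lemma finite_extendTo (hT₀ : T₀.Finite) : (extendTo T₀ G).Finite := by
  refine hT₀.union ((G.biUnion fun g => g.inits.toFinset).finite_toSet.subset ?_)
  rintro x ⟨g, hg, hxg⟩
  simpa using ⟨g, hg, hxg⟩

lemma extendTo_subset {T : Set (List Bool)} (hT : IsTree T) (hT₀ : T₀ ⊆ T)
    (hG : ∀ g ∈ G, g ∈ T) : extendTo T₀ G ⊆ T := by
  rintro x (hx | ⟨g, hg, hxg⟩)
  exacts [hT₀ hx, hT g (hG g hg) x hxg]

lemma mem_of_terminal_extendTo {x : List Bool} (hx : Terminal (extendTo T₀ G) x) :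
    x ∈ T₀ ∨ x ∈ G := by
  rcases hx.1 with hx₀ | ⟨g, hg, hxg⟩
  · exact Or.inl hx₀
  · exact Or.inr (hx.2 g (Or.inr ⟨g, hg, List.prefix_rfl⟩) hxg ▸ hg)

lemma endExt_extendTo (hT₀ : IsTree T₀) (hG : ∀ g ∈ G, ∃ σ, Terminal T₀ σ ∧ σ <+: g)
    (hne : ∃ g ∈ G, g ∉ T₀) : EndExt T₀ (extendTo T₀ G) := by
  refine ⟨(Set.ssubset_iff_of_subset Set.subset_union_left).2 ?_, ?_⟩
  · obtain ⟨g, hg, hg₀⟩ := hne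
    exact ⟨g, Or.inr ⟨g, hg, List.prefix_rfl⟩, hg₀⟩
  · rintro t (ht | ⟨g, hg, htg⟩) ht₀
    · exact absurd ht ht₀
    obtain ⟨σ, hσ, hσg⟩ := hG g hg
    exact ⟨σ, hσ, (List.prefix_or_prefix_of_prefix hσg htg).resolve_right
      fun htσ => ht₀ (hT₀ σ hσ.1 t htσ)⟩

end ExtendTo

lemma isAntichain_of_mem_iff_terminal {T₀ : Set (List Bool)} {Λ : Finset (List Bool)}
    (hΛ : ∀ σ, σ ∈ Λ ↔ Terminal T₀ σ) : IsAntichain (· <+: ·) (Λ : Set (List Bool)) :=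
  fun σ hσ τ hτ => isAntichain_terminal T₀ ((hΛ σ).1 hσ) ((hΛ τ).1 hτ)

lemma exists_forall_ne_of_lt {k n : ℕ} (hkn : k < n) (m : Fin k → ℕ) :
    ∃ lev, 1 ≤ lev ∧ lev ≤ n ∧ ∀ l, lev ≠ m l := by
  obtain ⟨lev, hlev, hlevm⟩ := Finset.exists_mem_notMem_of_card_lt_card
    (s := Finset.univ.image m) (t := Finset.Icc 1 n)
    (by simpa using Finset.card_image_le.trans_lt (by simpa using hkn))
  rw [Finset.mem_Icc] at hlev
  exact ⟨lev, hlev.1, hlev.2, fun l h => hlevm (h ▸ Finset.mem_image_of_mem m (Finset.mem_univ l))⟩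

namespace Ladder

variable {T : Set (List Bool)} {ρ : List Bool → List Bool → Finset (List Bool)} {k : ℕ}
  {D : Set (Fin k → List Bool)} {Λ : Finset (List Bool)} {n r r' : ℕ} {σ x z : List Bool}

section

variable {V cv : List Bool → List Bool} {J : Finset (List Bool)}
  (L : Ladder T ρ D Λ n V J cv)

lemma rung_prefix_rung (hσ : σ ∈ Λ) (hrr' : r ≤ r') (hr' : r' ≤ n) :
    L.rung r σ <+: L.rung r' σ := by
  induction r', hrr' using Nat.le_induction with
  | base => exact List.prefix_rfl
  | succ r' _ ih => exact (ih (by omega)).trans (L.rung_succ σ hσ r' (by omega)).1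

lemma length_rung_lt (hσ : σ ∈ Λ) (hrr' : r < r') (hr' : r' ≤ n) :
    (L.rung r σ).length < (L.rung r' σ).length :=
  (L.rung_succ σ hσ r (by omega)).2.1.trans_le (L.rung_prefix_rung hσ hrr' hr').length_le

end

variable (L : Ladder T ρ D Λ n id ∅ id)

lemma prefix_rung (hσ : σ ∈ Λ) (hr : r ≤ n) : σ <+: L.rung r σ := by
  simpa [L.rung_zero] using L.rung_prefix_rung hσ (Nat.zero_le r) hr

lemma rung_mem (hσT : σ ∈ T) (hσ : σ ∈ Λ) (hr : r ≤ n) : L.rung r σ ∈ T := by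
  cases r with
  | zero => simpa [L.rung_zero] using hσT
  | succ r => exact (L.rung_succ σ hσ r hr).2.2

lemma side_branches_off (hρ : IsWeight T ρ) (hσT : σ ∈ T) (hσ : σ ∈ Λ) (hr : r < n)
    (hz : z ∈ ρ (L.rung r σ) (L.rung (r + 1) σ)) :
    z ∈ T ∧ L.rung r σ <+: z ∧ ¬z <+: L.rung (r + 1) σ ∧ ¬L.rung (r + 1) σ <+: z :=
  hρ.branches_off (L.rung_mem hσT hσ hr.le) (L.rung_succ σ hσ r hr).2.2
    (L.rung_succ σ hσ r hr).1 hz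

lemma rung_succ_not_prefix_cover (hρ : IsWeight T ρ) (hσT : σ ∈ T) (hσ : σ ∈ Λ) (hr : r < n)
    (hz : z ∈ ρ (L.rung r σ) (L.rung (r + 1) σ)) : ¬L.rung (r + 1) σ <+: L.cover z := fun h =>
  have hside := L.side_branches_off hρ hσT hσ hr hz
  (List.prefix_or_prefix_of_prefix (L.cover_side σ hσ r hr z hz).1 h).elim hside.2.2.1
    hside.2.2.2

/-- The maximal nodes of the part of `T₁` above `σ`. -/
def tops (σ : List Bool) : Finset (List Bool) :=
  insert (L.rung n σ) ((Finset.range n).biUnion fun r =>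
    (ρ (L.rung r σ) (L.rung (r + 1) σ)).image L.cover)

lemma mem_tops : x ∈ L.tops σ ↔
    x = L.rung n σ ∨ ∃ r < n, ∃ z ∈ ρ (L.rung r σ) (L.rung (r + 1) σ), L.cover z = x := by
  simp [tops]

lemma prefix_and_mem_of_mem_tops (hρ : IsWeight T ρ) (hσT : σ ∈ T) (hσ : σ ∈ Λ)
    (hx : x ∈ L.tops σ) : σ <+: x ∧ x ∈ T := by
  rcases L.mem_tops.1 hx with rfl | ⟨r, hr, z, hz, rfl⟩
  · exact ⟨L.prefix_rung hσ le_rfl, L.rung_mem hσT hσ le_rfl⟩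
  · have hcover := L.cover_side σ hσ r hr z hz
    exact ⟨((L.prefix_rung hσ hr.le).trans (L.side_branches_off hρ hσT hσ hr hz).2.1).trans
      hcover.1, hcover.2⟩

lemma exists_level_of_mem_tops (hρ : IsWeight T ρ) (hσT : σ ∈ T) (hσ : σ ∈ Λ)
    (hx : x ∈ L.tops σ) : ∃ m, ∀ lev, 1 ≤ lev → lev ≤ n → lev ≠ m →
      L.rung lev σ <+: x ∨
        ∃ r, r + 1 < lev ∧ ∃ z ∈ ρ (L.rung r σ) (L.rung (r + 1) σ), L.cover z <+: x := by
  rcases L.mem_tops.1 hx with rfl | ⟨r, hr, z, hz, rfl⟩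
  · exact ⟨0, fun lev _ hlev _ => Or.inl (L.rung_prefix_rung hσ hlev le_rfl)⟩
  · refine ⟨r + 1, fun lev _ _ hne => ?_⟩
    rcases Nat.lt_or_gt_of_ne hne with h | h
    · exact Or.inl (((L.rung_prefix_rung hσ (by omega) hr.le).trans
        (L.side_branches_off hρ hσT hσ hr hz).2.1).trans (L.cover_side σ hσ r hr z hz).1)
    · exact Or.inr ⟨r, h, z, hz, List.prefix_rfl⟩

variable {T₀ : Set (List Bool)}

lemma rung_notMem (hΛ : ∀ σ, σ ∈ Λ ↔ Terminal T₀ σ) (hσ : σ ∈ Λ) (hr : 0 < r) (hrn : r ≤ n) :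
    L.rung r σ ∉ T₀ := fun h => by
  have hlt := L.length_rung_lt hσ hr hrn
  rw [((hΛ σ).1 hσ).2 _ h (L.prefix_rung hσ hrn), L.rung_zero, id] at hlt
  exact lt_irrefl _ hlt

lemma rung_mem_extendTo (hσ : σ ∈ Λ) (hr : r ≤ n) :
    L.rung r σ ∈ extendTo T₀ (Λ.biUnion L.tops) :=
  Or.inr ⟨L.rung n σ, Finset.mem_biUnion.2 ⟨σ, hσ, Finset.mem_insert_self _ _⟩,
    L.rung_prefix_rung hσ hr le_rfl⟩

lemma side_mem_extendTo (hσ : σ ∈ Λ) (hr : r < n)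
    (hz : z ∈ ρ (L.rung r σ) (L.rung (r + 1) σ)) : z ∈ extendTo T₀ (Λ.biUnion L.tops) :=
  Or.inr ⟨L.cover z, Finset.mem_biUnion.2 ⟨σ, hσ, L.mem_tops.2 (Or.inr ⟨r, hr, z, hz, rfl⟩)⟩,
    (L.cover_side σ hσ r hr z hz).1⟩

lemma extendTo_tops_subset (hT : IsTree T) (hρ : IsWeight T ρ) (hT₀T : T₀ ⊆ T)
    (hΛ : ∀ σ, σ ∈ Λ ↔ Terminal T₀ σ) : extendTo T₀ (Λ.biUnion L.tops) ⊆ T :=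
  extendTo_subset hT hT₀T fun g hg => by
    obtain ⟨σ, hσ, hg⟩ := Finset.mem_biUnion.1 hg
    exact (L.prefix_and_mem_of_mem_tops hρ (hT₀T ((hΛ σ).1 hσ).1) hσ hg).2

lemma terminal_rung (hρ : IsWeight T ρ) (hT₀ : IsTree T₀) (hT₀T : T₀ ⊆ T)
    (hΛ : ∀ σ, σ ∈ Λ ↔ Terminal T₀ σ) (hσ : σ ∈ Λ) (hn : 0 < n) :
    Terminal (extendTo T₀ (Λ.biUnion L.tops)) (L.rung n σ) := by
  refine ⟨L.rung_mem_extendTo hσ le_rfl, ?_⟩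
  rintro t (ht | ⟨g, hg, htg⟩) hnt
  · exact absurd (hT₀ t ht _ hnt) (L.rung_notMem hΛ hσ hn le_rfl)
  obtain ⟨σ', hσ', hg⟩ := Finset.mem_biUnion.1 hg
  have hσT := hT₀T ((hΛ σ).1 hσ).1
  obtain rfl : σ = σ' := (isAntichain_of_mem_iff_terminal hΛ).eq_of_prefix_of_prefix hσ hσ'
    ((L.prefix_rung hσ le_rfl).trans (hnt.trans htg))
    (L.prefix_and_mem_of_mem_tops hρ (hT₀T ((hΛ σ').1 hσ').1) hσ' hg).1
  rcases L.mem_tops.1 hg with rfl | ⟨r, hr, z, hz, rfl⟩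
  · exact htg.eq_of_length_le hnt.length_le
  · exact absurd ((L.rung_prefix_rung hσ hr le_rfl).trans (hnt.trans htg))
      (L.rung_succ_not_prefix_cover hρ hσT hσ hr hz)

lemma mem_tops_of_terminal (hρ : IsWeight T ρ) (hT₀T : T₀ ⊆ T)
    (hΛ : ∀ σ, σ ∈ Λ ↔ Terminal T₀ σ) (hσ : σ ∈ Λ) (hn : 0 < n)
    (hx : Terminal (extendTo T₀ (Λ.biUnion L.tops)) x) (hσx : σ <+: x) : x ∈ L.tops σ := by
  rcases mem_of_terminal_extendTo hx with hx₀ | hx'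
  · obtain rfl : x = σ := ((hΛ σ).1 hσ).2 x hx₀ hσx
    have hrung := hx.2 _ (L.rung_mem_extendTo hσ le_rfl) (L.prefix_rung hσ le_rfl)
    exact absurd (by rwa [hrung]) (L.rung_notMem hΛ hσ hn le_rfl)
  · obtain ⟨σ', hσ', hx'⟩ := Finset.mem_biUnion.1 hx'
    obtain rfl : σ = σ' := (isAntichain_of_mem_iff_terminal hΛ).eq_of_prefix_of_prefix hσ hσ'
      hσx (L.prefix_and_mem_of_mem_tops hρ (hT₀T ((hΛ σ').1 hσ').1) hσ' hx').1
    exact hx'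

lemma triLt (hρ : IsWeight T ρ) (hT₀ : IsTree T₀) (hT₀T : T₀ ⊆ T)
    (hΛ : ∀ σ, σ ∈ Λ ↔ Terminal T₀ σ) (hne : Λ.Nonempty) (hn : 0 < n) :
    TriLt ρ T₀ (extendTo T₀ (Λ.biUnion L.tops)) := by
  refine ⟨endExt_extendTo hT₀ (fun g hg => ?_) ?_, fun σ hσ₀ => ?_⟩
  · obtain ⟨σ, hσ, hg⟩ := Finset.mem_biUnion.1 hg
    exact ⟨σ, (hΛ σ).1 hσ, (L.prefix_and_mem_of_mem_tops hρ (hT₀T ((hΛ σ).1 hσ).1) hσ hg).1⟩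
  · obtain ⟨σ, hσ⟩ := hne
    exact ⟨L.rung n σ, Finset.mem_biUnion.2 ⟨σ, hσ, Finset.mem_insert_self _ _⟩,
      L.rung_notMem hΛ hσ hn le_rfl⟩
  have hσ := (hΛ σ).2 hσ₀
  have hmono : StrictMono fun i : Fin (n + 1) => (L.rung i σ).length :=
    fun i j hij => L.length_rung_lt hσ hij j.is_le
  refine ⟨List.ofFn fun i : Fin (n + 1) => L.rung i σ, by simp; omega,
    List.nodup_ofFn.2 fun i j h => hmono.injective (congrArg List.length h), ?_, ?_,
    ⟨L.rung n σ, ?_, L.terminal_rung hρ hT₀ hT₀T hΛ hσ hn⟩,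
    List.isChain_ofFn.2 fun i hi z hz => L.side_mem_extendTo (r := i) hσ (by omega) hz⟩
  · simp only [List.mem_ofFn]
    rintro _ ⟨i, rfl⟩
    exact ⟨L.rung_mem_extendTo hσ i.is_le, Or.inr (L.prefix_rung hσ i.is_le)⟩
  · simp [List.ofFn_succ, L.rung_zero]
  · rw [List.getLast?_eq_getElem?, List.length_ofFn, List.getElem?_ofFn]
    simp

lemma mem_of_terminal (hρ : IsWeight T ρ) (hT₀T : T₀ ⊆ T) (hΛ : ∀ σ, σ ∈ Λ ↔ Terminal T₀ σ)
    (hkn : k < n) {b F : Fin k → List Bool} (hb : Injective b) (hb₀ : ∀ l, Terminal T₀ (b l))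
    (hF : ∀ l, Terminal (extendTo T₀ (Λ.biUnion L.tops)) (F l)) (hbF : ∀ l, b l <+: F l) :
    F ∈ D := by
  have hbΛ l : b l ∈ Λ := (hΛ _).2 (hb₀ l)
  have hbT l : b l ∈ T := hT₀T (hb₀ l).1
  have htops l : F l ∈ L.tops (b l) :=
    L.mem_tops_of_terminal hρ hT₀T hΛ (hbΛ l) (by omega) (hF l) (hbF l)
  choose m hm using fun l => L.exists_level_of_mem_tops hρ (hbT l) (hbΛ l) (htops l)
  obtain ⟨lev, hlev₁, hlevn, hlevm⟩ := exists_forall_ne_of_lt hkn m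
  exact L.dense lev hlev₁ hlevn b hb hbΛ F
    (fun l => (L.prefix_and_mem_of_mem_tops hρ (hbT l) (hbΛ l) (htops l)).2)
    fun l => (hm l lev hlev₁ hlevn (hlevm l)).imp_right Or.inr

end Ladder

/-- Given a perfect tree `T`, a weight `ρ` on `T`, a finite (nonempty) subtree
`T₀` of `T`, and a dense open `D ⊆ T^k`, there is a finite subtree `T₁` with
`T₀ ◁_ρ T₁` such that any tuple of terminal nodes of `T₁` extending pairwise
distinct terminal nodes of `T₀` lies in `D`. -/
theorem stmt12 (T : Set (List Bool)) (hT : PerfectTree T)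
    (ρ : List Bool → List Bool → Finset (List Bool)) (hρ : IsWeight T ρ)
    (T₀ : Set (List Bool)) (hT₀sub : T₀ ⊆ T) (hT₀fin : T₀.Finite)
    (hT₀tree : IsTree T₀) (hT₀ne : T₀.Nonempty)
    (k : ℕ) (D : Set (Fin k → List Bool)) (hD : DenseOpenTuple k T D) :
    ∃ T₁ : Set (List Bool), T₁ ⊆ T ∧ T₁.Finite ∧ IsTree T₁ ∧ TriLt ρ T₀ T₁ ∧
      ∀ σ σ' : Fin k → List Bool, Function.Injective σ →
        (∀ l, Terminal T₀ (σ l)) → (∀ l, Terminal T₁ (σ' l)) →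
        (∀ l, σ l <+: σ' l) → σ' ∈ D := by
  have hfin : {σ | Terminal T₀ σ}.Finite := hT₀fin.subset fun _ hσ => hσ.1
  have hΛ : ∀ σ, σ ∈ hfin.toFinset ↔ Terminal T₀ σ := fun _ => hfin.mem_toFinset
  obtain ⟨L⟩ := exists_ladder hT hρ hD (isAntichain_of_mem_iff_terminal hΛ) (k + 1) id ∅ id
    (fun σ hσ => ⟨hT₀sub ((hΛ σ).1 hσ).1, List.prefix_rfl⟩) (by simp)
  obtain ⟨σ, hσ⟩ := exists_terminal hT₀fin hT₀ne
  exact ⟨_, L.extendTo_tops_subset hT.1 hρ hT₀sub hΛ, finite_extendTo hT₀fin,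
    isTree_extendTo hT₀tree, L.triLt hρ hT₀tree hT₀sub hΛ ⟨σ, (hΛ σ).2 hσ⟩ k.succ_pos,
    fun _ _ hb hb₀ hF hbF => L.mem_of_terminal hρ hT₀sub hΛ k.lt_succ_self hb hb₀ hF hbF⟩
end

section
/- For any g ∈ {−1,0,1}^k and any open set O ⊆ (2^ω)^k, the set X = {x̄ ∈ (2^ω)^k : ∃ȳ ∈ O, x̄ R̃_g ȳ} is Borel. -/
/-- The lexicographic (strict) order on Cantor space `2^ω`. -/
def lexLt (x y : ℕ → Bool) : Prop :=
  ∃ n : ℕ, (∀ m < n, x m = y m) ∧ x n < y n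

/-- The relation `R̃_g` on `(2^ω)^k` for `g ∈ {−1,0,1}^k`, defined coordinatewise
via the lexicographic order. -/
def Rtil {k : ℕ} (g : Fin k → SignType) (x y : Fin k → ℕ → Bool) : Prop :=
  ∀ l : Fin k, match g l with
    | SignType.neg => lexLt (x l) (y l)
    | SignType.zero => x l = y l
    | SignType.pos => lexLt (y l) (x l)

/-! The set is in fact open. If `x R̃_g y` with `y ∈ O`, let `y'` follow `x'` on the coordinates
where `g` vanishes and equal `y` elsewhere. Then `x' ↦ y'` is continuous, and strict lexicographic
inequality is an open condition, so for `x'` near `x` both `y' ∈ O` and `x' R̃_g y'` persist. -/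

open Set

theorem isOpen_setOf_lexLt : IsOpen {p : (ℕ → Bool) × (ℕ → Bool) | lexLt p.1 p.2} := by
  have hcoord : ∀ m, Continuous fun p : (ℕ → Bool) × (ℕ → Bool) => (p.1 m, p.2 m) :=
    fun m => by fun_prop
  simp only [lexLt, ofPred_exists, ofPred_and, ofPred_forall]
  refine isOpen_iUnion fun n => IsOpen.inter ?_ ?_
  · exact (finite_lt_nat n).isOpen_biInter fun m _ =>
      (isOpen_discrete {q : Bool × Bool | q.1 = q.2}).preimage (hcoord m)
  · exact (isOpen_discrete {q : Bool × Bool | q.1 < q.2}).preimage (hcoord n)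

theorem continuous_piecewise_const {ι : Type*} {π : ι → Type*} [∀ i, TopologicalSpace (π i)]
    (s : Set ι) [DecidablePred (· ∈ s)] (y : ∀ i, π i) :
    Continuous fun x : ∀ i, π i => s.piecewise x y :=
  continuous_pi fun i => by
    by_cases hi : i ∈ s
    · simpa only [piecewise_eq_of_mem _ _ _ hi] using continuous_apply i
    · simpa only [piecewise_eq_of_notMem _ _ _ hi] using continuous_const

section

variable {k : ℕ} (g : Fin k → SignType)

theorem isOpen_setOf_Rtil_piecewise (y : Fin k → ℕ → Bool) :
    IsOpen {x | Rtil g x ({l | g l = 0}.piecewise x y)} := by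
  have hlt := isOpen_setOf_lexLt
  simp only [Rtil, ofPred_forall]
  refine isOpen_iInter_of_finite fun l => ?_
  rcases h : g l with _ | _ | _
  · simp [h]
  · simpa [h] using hlt.preimage (f := fun x : Fin k → ℕ → Bool => (x l, y l)) (by fun_prop)
  · simpa [h] using hlt.preimage (f := fun x : Fin k → ℕ → Bool => (y l, x l)) (by fun_prop)

theorem piecewise_eq_of_Rtil {x y : Fin k → ℕ → Bool} (h : Rtil g x y) :
    {l | g l = 0}.piecewise x y = y := by
  ext1 l
  by_cases hl : g l = 0
  · simpa [hl] using h l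
  · exact piecewise_eq_of_notMem _ _ _ hl

theorem isOpen_setOf_exists_Rtil {O : Set (Fin k → ℕ → Bool)} (hO : IsOpen O) :
    IsOpen {x | ∃ y ∈ O, Rtil g x y} := by
  refine isOpen_iff_forall_mem_open.2 fun x ⟨y, hyO, hxy⟩ => ?_
  let φ := fun x' : Fin k → ℕ → Bool => {l | g l = 0}.piecewise x' y
  refine ⟨φ ⁻¹' O ∩ {x' | Rtil g x' (φ x')}, fun x' hx' => ⟨φ x', hx'⟩,
    (hO.preimage (continuous_piecewise_const _ y)).inter (isOpen_setOf_Rtil_piecewise g y), ?_⟩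
  have hφ : φ x = y := piecewise_eq_of_Rtil g hxy
  exact ⟨show φ x ∈ O from hφ ▸ hyO, show Rtil g x (φ x) from hφ ▸ hxy⟩

end

/-- For any `g ∈ {−1,0,1}^k` and any open `O ⊆ (2^ω)^k`, the set
`{x̄ : ∃ ȳ ∈ O, x̄ R̃_g ȳ}` is Borel. -/
theorem stmt14 {k : ℕ} (g : Fin k → SignType) (O : Set (Fin k → ℕ → Bool))
    (hO : IsOpen O) :
    @MeasurableSet (Fin k → ℕ → Bool) (borel (Fin k → ℕ → Bool))
      {x : Fin k → ℕ → Bool | ∃ y ∈ O, Rtil g x y} :=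
  MeasurableSpace.measurableSet_generateFrom (isOpen_setOf_exists_Rtil g hO)
end

section
/- Let ⟨x_n : n ∈ ω⟩ be a sequence of subsets of ω, write x_n^0 = x_n, x_n^1 = ω ∖ x_n, and for g ∈ 2^ω set y_{n,g} = ⋂_{m ≤ n} x_m^{g(m)} and y_g = ⋃_{n∈ω} (y_{n,g} ∩ f(n)) for a fixed f ∈ ω^ω. Then for all g ≠ h in 2^ω, the set y_g ∩ y_h is finite. -/
/-- `y_{n,g} = ⋂_{m ≤ n} x_m^{g(m)}`, where `x^0 = x` and `x^1 = ω ∖ x`. -/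
def yStage (x : ℕ → Set ℕ) (g : ℕ → Bool) (n : ℕ) : Set ℕ :=
  ⋂ m ∈ Finset.range (n + 1), (if g m = true then x m else (x m)ᶜ)

/-- `y_g = ⋃_n (y_{n,g} ∩ [0, f(n)))`. -/
def yDiag (x : ℕ → Set ℕ) (f : ℕ → ℕ) (g : ℕ → Bool) : Set ℕ :=
  ⋃ n : ℕ, yStage x g n ∩ Set.Iio (f n)

/-!
Choose `n` with `g n ≠ h n`. Past stage `n` the pieces of `y_g` and `y_h` lie in the disjoint
sets `y_{n,g}` and `y_{n,h}`, so a common element of `y_g` and `y_h` must come from one of the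
finitely many earlier pieces, all of which lie below `max_{m < n} f(m)`.
-/

section

variable (x : ℕ → Set ℕ)

lemma mem_yStage_iff {g : ℕ → Bool} {n k : ℕ} :
    k ∈ yStage x g n ↔ ∀ m ≤ n, k ∈ (if g m = true then x m else (x m)ᶜ) := by
  simp [yStage]

lemma yStage_antitone (g : ℕ → Bool) : Antitone (yStage x g) := fun _ _ hab _ hk =>
  (mem_yStage_iff x).2 fun m hm => (mem_yStage_iff x).1 hk m (hm.trans hab)

lemma disjoint_yStage_of_ne {g h : ℕ → Bool} {n : ℕ} (hn : g n ≠ h n) :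
    Disjoint (yStage x g n) (yStage x h n) := by
  refine Set.disjoint_left.2 fun k hkg hkh => ?_
  have hg := (mem_yStage_iff x).1 hkg n le_rfl
  have hh := (mem_yStage_iff x).1 hkh n le_rfl
  cases hgn : g n <;> cases hhn : h n <;> simp_all

lemma mem_yStage_of_mem_yDiag {f : ℕ → ℕ} {g : ℕ → Bool} {n k : ℕ} (hk : k ∈ yDiag x f g)
    (hfk : ∀ m < n, f m ≤ k) : k ∈ yStage x g n := by
  obtain ⟨m, hkm, hkfm⟩ := Set.mem_iUnion.1 hk
  have hnm : n ≤ m := not_lt.1 fun hmn => (hfk m hmn).not_gt hkfm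
  exact yStage_antitone x g hnm hkm

end

/-- For all `g ≠ h` in `2^ω`, the set `y_g ∩ y_h` is finite. -/
theorem stmt19 (x : ℕ → Set ℕ) (f : ℕ → ℕ) (g h : ℕ → Bool) (hgh : g ≠ h) :
    (yDiag x f g ∩ yDiag x f h).Finite := by
  obtain ⟨n, hn⟩ := Function.ne_iff.1 hgh
  refine (Set.finite_Iio ((Finset.range n).sup f)).subset fun k ⟨hkg, hkh⟩ => ?_
  by_contra hk
  have hfk : ∀ m < n, f m ≤ k := fun m hm =>
    (Finset.le_sup (Finset.mem_range.2 hm)).trans (not_lt.1 hk)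
  exact Set.disjoint_left.1 (disjoint_yStage_of_ne x hn)
    (mem_yStage_of_mem_yDiag x hkg hfk) (mem_yStage_of_mem_yDiag x hkh hfk)
end
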